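/- arXiv:1306.4524 — 6 statements merged into one kernel-verified Lean document; each statement's English description precedes it below -/
import Mathlib

section
/- For every ε > 0, the number of triples (y1,y2,y3) of natural numbers with yi ≤ N, y1+y2+y3 = m1 and y1^2+y2^2+y3^2 = m2 is O_ε(N^ε), uniformly in m1, m2. -/
/-!
Put `u = 2y₁ - y₂ - y₃` and `v = y₂ - y₃`. Then `u² + 3v² = 6m₂ - 2m₁² =: M`, and the triple is
recovered from `(u, v)`, so it suffices to count representations of `M ≤ 18 N²` by `x² + 3y²`.
Dividing out `g = gcd (x, y)` leaves a primitive representation of `M / g²`, and a primitive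
representation `(x, y)` of `m` is determined up to sign by the class `x / y`, a square root of `-3`
modulo `m`. There are at most `2 τ(m)` such roots, so `M` has at most `4 τ(M)²` representations,
and `τ(n) = O_δ(n^δ)` for every `δ > 0`.
-/

open Finset

lemma add_one_le_rpow_of_two_le_rpow {x δ : ℝ} (hx : 0 ≤ x) (h : 2 ≤ x ^ δ) (k : ℕ) :
    (k : ℝ) + 1 ≤ x ^ (k * δ) := by
  rw [mul_comm, Real.rpow_mul hx, Real.rpow_natCast]
  calc (k : ℝ) + 1 ≤ 2 ^ k := by exact_mod_cast Nat.lt_two_pow_self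
    _ ≤ (x ^ δ) ^ k := by gcongr

lemma add_one_le_mul_two_rpow {δ : ℝ} (hδ : 0 < δ) (k : ℕ) :
    (k : ℝ) + 1 ≤ (1 + 2 / δ) * 2 ^ (k * δ) := by
  have hexp : 1 + k * δ / 2 ≤ (2 : ℝ) ^ (k * δ) := by
    rw [Real.rpow_def_of_pos two_pos]
    have := Real.add_one_le_exp (Real.log 2 * (k * δ))
    nlinarith [Real.log_two_gt_d9, (by positivity : (0 : ℝ) ≤ k * δ)]
  calc (k : ℝ) + 1 ≤ (1 + 2 / δ) * (1 + k * δ / 2) := by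
        field_simp
        nlinarith [(by positivity : (0 : ℝ) ≤ k * δ)]
    _ ≤ (1 + 2 / δ) * 2 ^ (k * δ) := by gcongr

lemma Nat.cast_rpow_eq_prod_primeFactors {n : ℕ} (hn : n ≠ 0) (δ : ℝ) :
    (n : ℝ) ^ δ = ∏ p ∈ n.primeFactors, (p : ℝ) ^ (n.factorization p * δ) := by
  conv_lhs => rw [← Nat.prod_factorization_pow_eq_self hn]
  rw [Nat.prod_factorization_eq_prod_primeFactors, Nat.cast_prod,
    ← Real.finsetProd_rpow _ _ (fun _ _ => by positivity)]
  refine prod_congr rfl fun p _ => ?_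
  rw [Nat.cast_pow, ← Real.rpow_natCast, ← Real.rpow_mul (Nat.cast_nonneg p)]

theorem Nat.exists_card_divisors_le_mul_rpow {δ : ℝ} (hδ : 0 < δ) :
    ∃ C : ℝ, 1 ≤ C ∧ ∀ n : ℕ, n ≠ 0 → (#n.divisors : ℝ) ≤ C * n ^ δ := by
  classical
  set K := ⌈(2 : ℝ) ^ δ⁻¹⌉₊
  set B := 1 + 2 / δ
  have hB : 1 ≤ B := le_add_of_nonneg_right (by positivity)
  refine ⟨B ^ K, one_le_pow₀ hB, fun n hn => ?_⟩
  -- primes `p ≥ K` have `p ^ δ ≥ 2`, and the finitely many smaller ones contribute at most `B`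
  have hlocal : ∀ p ∈ n.primeFactors, (n.factorization p : ℝ) + 1 ≤
      (if p < K then B else 1) * (p : ℝ) ^ (n.factorization p * δ) := by
    intro p hp
    have hp2 : (2 : ℝ) ≤ p := by exact_mod_cast (Nat.prime_of_mem_primeFactors hp).two_le
    split_ifs with hpK
    · calc (n.factorization p : ℝ) + 1 ≤ B * 2 ^ (n.factorization p * δ) :=
            add_one_le_mul_two_rpow hδ _
        _ ≤ B * (p : ℝ) ^ (n.factorization p * δ) := by gcongr
    · rw [one_mul]
      refine add_one_le_rpow_of_two_le_rpow (Nat.cast_nonneg p) ?_ _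
      calc (2 : ℝ) = ((2 : ℝ) ^ δ⁻¹) ^ δ := by
            rw [← Real.rpow_mul zero_le_two, inv_mul_cancel₀ hδ.ne', Real.rpow_one]
        _ ≤ (p : ℝ) ^ δ := by
            gcongr
            exact (Nat.le_ceil _).trans (by exact_mod_cast not_lt.1 hpK)
  have hsmall : ∏ p ∈ n.primeFactors, (if p < K then B else 1) ≤ B ^ K := by
    rw [← prod_filter, prod_const]
    refine pow_le_pow_right₀ hB ((card_le_card fun p hp => ?_).trans (card_range K).le)
    exact mem_range.2 (mem_filter.1 hp).2
  calc (#n.divisors : ℝ) = ∏ p ∈ n.primeFactors, ((n.factorization p : ℝ) + 1) := by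
        rw [Nat.card_divisors hn]; push_cast; rfl
    _ ≤ ∏ p ∈ n.primeFactors, (if p < K then B else 1) * (p : ℝ) ^ (n.factorization p * δ) :=
        prod_le_prod (fun _ _ => by positivity) hlocal
    _ ≤ B ^ K * n ^ δ := by
        rw [prod_mul_distrib, ← Nat.cast_rpow_eq_prod_primeFactors hn]
        gcongr

lemma Int.div_gcd_dvd_of_dvd_mul {m c a : ℤ} (hm : 0 < m) (h : m ∣ c * a) :
    m / m.gcd c ∣ a := by
  have : c * a ≡ c * 0 [ZMOD m] := by rwa [mul_zero, Int.modEq_zero_iff_dvd]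
  exact Int.modEq_zero_iff_dvd.1 (Int.ModEq.cancel_left_div_gcd hm this)

lemma Int.mul_dvd_gcd_mul_of_dvd_of_dvd {d e x : ℤ} (hd : d ∣ x) (he : e ∣ x) :
    d * e ∣ d.gcd e * x := by
  have hde : (d * e).natAbs = d.gcd e * d.lcm e := by
    rw [Int.natAbs_mul, Int.gcd_mul_lcm]
  rw [← Int.natAbs_dvd, hde, Nat.cast_mul]
  exact mul_dvd_mul_left _ (Int.coe_lcm_dvd hd he)

lemma dvd_two_mul_sub_of_gcd_eq {m a₀ a b : ℤ} (hm : 0 < m) (h₀ : m ∣ a₀ ^ 2 + 3)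
    (ha : m ∣ a ^ 2 + 3) (hb : m ∣ b ^ 2 + 3) (hab : (a - a₀).gcd m = (b - a₀).gcd m) :
    m ∣ 2 * (a - b) := by
  set d : ℤ := ↑((a - a₀).gcd m)
  set e : ℤ := m / d
  have hde : d * e = m := Int.mul_ediv_cancel' (Int.gcd_dvd_right _ _)
  have hd_sub : ∀ c, m ∣ c ^ 2 + 3 → ((c - a₀).gcd m : ℤ) = d → d ∣ c - a₀ ∧ e ∣ c + a₀ := by
    intro c hc hcd
    refine ⟨hcd ▸ Int.gcd_dvd_left _ _, ?_⟩
    have hmul : m ∣ (c - a₀) * (c + a₀) := by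
      have := dvd_sub hc h₀; ring_nf at this ⊢; exact this
    have := Int.div_gcd_dvd_of_dvd_mul hm hmul
    rwa [Int.gcd_comm, hcd] at this
  obtain ⟨hda, hea⟩ := hd_sub a ha rfl
  obtain ⟨hdb, heb⟩ := hd_sub b hb (by rw [← hab])
  -- `g = gcd d e` divides `2 a₀`, and `g² ∣ m ∣ a₀² + 3`, so `g² ∣ 12`
  set g : ℕ := Int.gcd d e
  have hg_two : (g : ℤ) ∣ 2 := by
    have hgd : (g : ℤ) ∣ d := Int.gcd_dvd_left _ _
    have hge : (g : ℤ) ∣ e := Int.gcd_dvd_right _ _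
    have h2a₀ : (g : ℤ) ∣ 2 * a₀ := by
      have := dvd_sub (hge.trans hea) (hgd.trans hda); ring_nf at this ⊢; exact this
    have hgg : (g : ℤ) * g ∣ 12 := by
      have h4 := (mul_dvd_mul hgd hge).trans (hde ▸ h₀ |>.mul_left 4)
      have := dvd_sub h4 (mul_dvd_mul h2a₀ h2a₀); ring_nf at this ⊢; exact this
    have hgg' : g * g ∣ 12 := by exact_mod_cast hgg
    have hg3 : g ≤ 3 := by nlinarith [Nat.le_of_dvd (by norm_num) hgg']
    interval_cases g <;> simp_all
  have hd_ab : d ∣ a - b := by simpa using dvd_sub hda hdb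
  have he_ab : e ∣ a - b := by simpa using dvd_sub hea heb
  rw [← hde]
  exact (Int.mul_dvd_gcd_mul_of_dvd_of_dvd hd_ab he_ab).trans (mul_dvd_mul_right hg_two _)

lemma ZMod.dvd_val_sq_add_three {m : ℕ} [NeZero m] {s : ZMod m} (hs : s ^ 2 = -3) :
    (m : ℤ) ∣ (s.val : ℤ) ^ 2 + 3 := by
  rw [← ZMod.intCast_zmod_eq_zero_iff_dvd]
  push_cast
  rw [ZMod.natCast_zmod_val, hs, neg_add_cancel]

-- For a fixed root `s₀`, at most two roots `s` share the same value of `gcd (s - s₀, m)`.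
lemma ZMod.card_sq_eq_neg_three_le (m : ℕ) [NeZero m] :
    #{s : ZMod m | s ^ 2 = -3} ≤ 2 * #m.divisors := by
  classical
  set R := ({s : ZMod m | s ^ 2 = -3} : Finset (ZMod m))
  obtain hR | ⟨s₀, hs₀⟩ := R.eq_empty_or_nonempty
  · simp [hR]
  have hm : (0 : ℤ) < m := by exact_mod_cast Nat.pos_of_ne_zero (NeZero.ne m)
  have hroot : ∀ s ∈ R, (m : ℤ) ∣ (s.val : ℤ) ^ 2 + 3 :=
    fun s hs => ZMod.dvd_val_sq_add_three (mem_filter.1 hs).2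
  set f : ZMod m → ℕ := fun s => Int.gcd ((s.val : ℤ) - s₀.val) m
  have hfib : ∀ d ∈ R.image f, #{s ∈ R | f s = d} ≤ 2 := by
    intro d hd
    obtain ⟨t, ht, rfl⟩ := mem_image.1 hd
    calc #{s ∈ R | f s = f t} = #({s ∈ R | f s = f t}.image (· - t)) :=
          (card_image_of_injective _ (sub_left_injective)).symm
      _ ≤ #{x : ZMod m | 2 • x = 0} := by
          refine card_le_card fun x hx => ?_
          obtain ⟨s, hs, rfl⟩ := mem_image.1 hx
          obtain ⟨hsR, hst⟩ := mem_filter.1 hs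
          have := dvd_two_mul_sub_of_gcd_eq hm (hroot s₀ hs₀) (hroot s hsR) (hroot t ht)
            hst
          rw [← ZMod.intCast_zmod_eq_zero_iff_dvd] at this
          push_cast [ZMod.natCast_zmod_val] at this
          simpa [nsmul_eq_mul] using this
      _ ≤ 2 := IsAddCyclic.card_nsmul_eq_zero_le two_pos
  calc #R ≤ 2 * #(R.image f) := card_le_mul_card_image R 2 hfib
    _ ≤ 2 * #m.divisors := by
        gcongr
        intro d hd
        obtain ⟨s, -, rfl⟩ := mem_image.1 hd
        exact Nat.mem_divisors.2 ⟨Int.natCast_dvd_natCast.1 (Int.gcd_dvd_right _ _),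
          NeZero.ne m⟩

lemma Int.eq_zero_of_sq_add_three_mul_sq_eq_zero {x y : ℤ} (h : x ^ 2 + 3 * y ^ 2 = 0) :
    x = 0 ∧ y = 0 := by
  constructor <;> nlinarith [sq_nonneg x, sq_nonneg y]

namespace SqAddThreeSq

noncomputable def reps (M : ℕ) : Finset (ℤ × ℤ) :=
  (Icc (-M : ℤ) M ×ˢ Icc (-M : ℤ) M).filter fun p => p.1 ^ 2 + 3 * p.2 ^ 2 = M

noncomputable def primReps (M : ℕ) : Finset (ℤ × ℤ) := (reps M).filter fun p => p.1.gcd p.2 = 1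

variable {M : ℕ} {p q : ℤ × ℤ}

lemma mem_reps : p ∈ reps M ↔ p.1 ^ 2 + 3 * p.2 ^ 2 = M := by
  refine ⟨fun h => (mem_filter.1 h).2, fun h => mem_filter.2 ⟨?_, h⟩⟩
  simp only [mem_product, mem_Icc]
  refine ⟨⟨?_, ?_⟩, ?_, ?_⟩ <;> nlinarith [sq_nonneg p.1, sq_nonneg p.2]

lemma mem_primReps : p ∈ primReps M ↔ p.1 ^ 2 + 3 * p.2 ^ 2 = M ∧ IsCoprime p.1 p.2 := by
  rw [primReps, mem_filter, mem_reps, Int.isCoprime_iff_gcd_eq_one]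

lemma reps_zero : reps 0 = {0} := by
  ext p
  rw [mem_reps, mem_singleton, Nat.cast_zero, Prod.ext_iff]
  exact ⟨Int.eq_zero_of_sq_add_three_mul_sq_eq_zero, fun ⟨h1, h2⟩ => by simp [h1, h2]⟩

lemma isCoprime_snd_of_mem_primReps (hp : p ∈ primReps M) : IsCoprime p.2 M := by
  obtain ⟨hM, hcop⟩ := mem_primReps.1 hp
  rw [← hM, show p.1 ^ 2 + 3 * p.2 ^ 2 = p.1 ^ 2 + p.2 * (3 * p.2) by ring]
  exact hcop.symm.pow_right.add_mul_left_right _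

lemma root_sq_of_mem_primReps (hp : p ∈ primReps M) :
    ((p.1 : ZMod M) * (p.2 : ZMod M)⁻¹) ^ 2 = -3 := by
  have hunit := ZMod.coe_int_mul_inv_eq_one (isCoprime_snd_of_mem_primReps hp)
  have hzero : (p.1 : ZMod M) ^ 2 + 3 * (p.2 : ZMod M) ^ 2 = 0 := by
    have := congrArg (Int.cast : ℤ → ZMod M) (mem_primReps.1 hp).1
    push_cast at this
    rwa [ZMod.natCast_self] at this
  linear_combination ((p.2 : ZMod M)⁻¹) ^ 2 * hzero
    - 3 * ((p.2 : ZMod M) * (p.2 : ZMod M)⁻¹ + 1) * hunit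

-- By the identity `(x x' + 3 y y')² + 3 (x y' - x' y)² = M²`, the cross term is too small to be a
-- nonzero multiple of `M`.
lemma eq_or_eq_neg_of_dvd_cross (hp : p ∈ reps M) (hq : q ∈ reps M)
    (h : (M : ℤ) ∣ p.1 * q.2 - q.1 * p.2) : p = q ∨ p = -q := by
  rw [mem_reps] at hp hq
  have hbrahmagupta :
      (p.1 * q.1 + 3 * p.2 * q.2) ^ 2 + 3 * (p.1 * q.2 - q.1 * p.2) ^ 2 = M ^ 2 := by
    rw [sq (M : ℤ)]; nth_rw 1 [← hp]; rw [← hq]; ring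
  have hcross : p.1 * q.2 - q.1 * p.2 = 0 := by
    obtain ⟨k, hk⟩ := h
    rcases eq_or_ne k 0 with rfl | hk0
    · simpa using hk
    have : (1 : ℤ) ≤ k ^ 2 := by nlinarith [sq_pos_of_ne_zero hk0]
    rw [hk] at hbrahmagupta ⊢
    nlinarith [sq_nonneg (p.1 * q.1 + 3 * p.2 * q.2), sq_nonneg (M : ℤ)]
  rw [hcross] at hbrahmagupta
  rcases sq_eq_sq_iff_eq_or_eq_neg.1 (by simpa using hbrahmagupta) with hpos | hneg
  · left
    have := Int.eq_zero_of_sq_add_three_mul_sq_eq_zero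
      (x := p.1 - q.1) (y := p.2 - q.2) (by linear_combination hp + hq - 2 * hpos)
    exact Prod.ext (by linarith [this.1]) (by linarith [this.2])
  · right
    have := Int.eq_zero_of_sq_add_three_mul_sq_eq_zero
      (x := p.1 + q.1) (y := p.2 + q.2) (by linear_combination hp + hq + 2 * hneg)
    exact Prod.ext (by rw [Prod.fst_neg]; linarith [this.1]) (by rw [Prod.snd_neg]; linarith [this.2])

lemma card_primReps_le (M : ℕ) [NeZero M] : #(primReps M) ≤ 4 * #M.divisors := by
  classical
  set φ : ℤ × ℤ → ZMod M := fun p => p.1 * (p.2 : ZMod M)⁻¹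
  have hfib : ∀ s ∈ (primReps M).image φ, #{p ∈ primReps M | φ p = s} ≤ 2 := by
    intro s hs
    obtain ⟨p₀, hp₀, rfl⟩ := mem_image.1 hs
    refine (card_le_card (t := {p₀, -p₀}) fun p hp => ?_).trans card_le_two
    obtain ⟨hp, hφ⟩ := mem_filter.1 hp
    have hu := ZMod.coe_int_mul_inv_eq_one (isCoprime_snd_of_mem_primReps hp)
    have hu₀ := ZMod.coe_int_mul_inv_eq_one (isCoprime_snd_of_mem_primReps hp₀)
    have hcross : (M : ℤ) ∣ p.1 * p₀.2 - p₀.1 * p.2 := by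
      rw [← ZMod.intCast_zmod_eq_zero_iff_dvd]
      push_cast
      linear_combination ((p.2 : ZMod M) * p₀.2) * hφ - (p.1 * (p₀.2 : ZMod M)) * hu
        + (p₀.1 * (p.2 : ZMod M)) * hu₀
    rcases eq_or_eq_neg_of_dvd_cross (mem_filter.1 hp).1 (mem_filter.1 hp₀).1 hcross with h | h
      <;> simp [h]
  calc #(primReps M) ≤ 2 * #((primReps M).image φ) := card_le_mul_card_image _ 2 hfib
    _ ≤ 2 * #{s : ZMod M | s ^ 2 = -3} := by
        gcongr
        intro s hs
        obtain ⟨p, hp, rfl⟩ := mem_image.1 hs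
        exact mem_filter.2 ⟨mem_univ _, root_sq_of_mem_primReps hp⟩
    _ ≤ 4 * #M.divisors := by linarith [ZMod.card_sq_eq_neg_three_le M]

lemma gcd_pos_of_mem_reps (hM : M ≠ 0) (hp : p ∈ reps M) : 0 < p.1.gcd p.2 := by
  refine Int.gcd_pos_iff.2 (not_and_or.1 fun h => hM ?_)
  simpa [h.1, h.2, eq_comm] using mem_reps.1 hp

lemma gcd_mul_gcd_dvd_of_mem_reps (hp : p ∈ reps M) : p.1.gcd p.2 * p.1.gcd p.2 ∣ M := by
  have hg₁ : (p.1.gcd p.2 : ℤ) ∣ p.1 := Int.gcd_dvd_left _ _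
  have hg₂ : (p.1.gcd p.2 : ℤ) ∣ p.2 := Int.gcd_dvd_right _ _
  have : ((p.1.gcd p.2 : ℤ) * p.1.gcd p.2) ∣ M := by
    rw [← mem_reps.1 hp, sq, sq]
    exact dvd_add (mul_dvd_mul hg₁ hg₁) ((mul_dvd_mul hg₂ hg₂).mul_left 3)
  exact_mod_cast this

lemma div_gcd_mem_primReps {g : ℕ} (hM : M ≠ 0) (hp : p ∈ reps M) (hg : p.1.gcd p.2 = g) :
    (p.1 / g, p.2 / g) ∈ primReps (M / (g * g)) := by
  have hg0 : 0 < g := hg ▸ gcd_pos_of_mem_reps hM hp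
  obtain ⟨x, hx⟩ : (g : ℤ) ∣ p.1 := hg ▸ Int.gcd_dvd_left _ _
  obtain ⟨y, hy⟩ : (g : ℤ) ∣ p.2 := hg ▸ Int.gcd_dvd_right _ _
  have hgz : (g : ℤ) ≠ 0 := by positivity
  have hM' : (M : ℤ) = g * g * (x ^ 2 + 3 * y ^ 2) := by
    rw [← mem_reps.1 hp, hx, hy]; ring
  rw [mem_primReps, hx, hy, Int.mul_ediv_cancel_left _ hgz, Int.mul_ediv_cancel_left _ hgz]
  refine ⟨?_, ?_⟩
  · rw [Int.natCast_div, Nat.cast_mul, hM', Int.mul_ediv_cancel_left _ (by positivity)]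
  · have := Int.gcd_div_gcd_div_gcd (hg ▸ hg0)
    rw [hg, hx, hy, Int.mul_ediv_cancel_left _ hgz, Int.mul_ediv_cancel_left _ hgz] at this
    exact Int.isCoprime_iff_gcd_eq_one.2 this

lemma card_reps_le (hM : M ≠ 0) : #(reps M) ≤ 4 * #M.divisors ^ 2 := by
  classical
  set γ : ℤ × ℤ → ℕ := fun p => p.1.gcd p.2
  have hfib : ∀ g ∈ (reps M).image γ, #{p ∈ reps M | γ p = g} ≤ 4 * #M.divisors := by
    intro g hg
    obtain ⟨p₀, hp₀, rfl⟩ := mem_image.1 hg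
    have hdvd := gcd_mul_gcd_dvd_of_mem_reps hp₀
    have hpos := gcd_pos_of_mem_reps hM hp₀
    have : NeZero (M / (γ p₀ * γ p₀)) :=
      ⟨(Nat.div_pos (Nat.le_of_dvd (Nat.pos_of_ne_zero hM) hdvd) (by positivity)).ne'⟩
    calc #{p ∈ reps M | γ p = γ p₀} ≤ #(primReps (M / (γ p₀ * γ p₀))) := by
          refine card_le_card_of_injOn (fun p => (p.1 / γ p₀, p.2 / γ p₀))
            (fun p hp => div_gcd_mem_primReps hM (mem_filter.1 hp).1 (mem_filter.1 hp).2) ?_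
          have hmul : ∀ r ∈ {p ∈ reps M | γ p = γ p₀},
              r = (r.1 / γ p₀ * γ p₀, r.2 / γ p₀ * γ p₀) := by
            intro r hr
            rw [← (mem_filter.1 hr).2, Int.ediv_mul_cancel (Int.gcd_dvd_left _ _),
              Int.ediv_mul_cancel (Int.gcd_dvd_right _ _)]
          intro p hp q hq hpq
          obtain ⟨h₁, h₂⟩ := Prod.mk.inj hpq
          rw [hmul p hp, hmul q hq, h₁, h₂]
      _ ≤ 4 * #(M / (γ p₀ * γ p₀)).divisors := card_primReps_le _
      _ ≤ 4 * #M.divisors := by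
          gcongr
          exact Nat.div_dvd_of_dvd hdvd
  have himage : (reps M).image γ ⊆ M.divisors := by
    intro g hg
    obtain ⟨p, hp, rfl⟩ := mem_image.1 hg
    exact Nat.mem_divisors.2 ⟨(Dvd.intro _ rfl).trans (gcd_mul_gcd_dvd_of_mem_reps hp), hM⟩
  calc #(reps M) ≤ 4 * #M.divisors * #((reps M).image γ) := card_le_mul_card_image _ _ hfib
    _ ≤ 4 * #M.divisors * #M.divisors := by gcongr
    _ = 4 * #M.divisors ^ 2 := by ring

lemma exists_card_reps_le_mul_rpow {δ : ℝ} (hδ : 0 < δ) :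
    ∃ C : ℝ, 0 < C ∧ ∀ (M : ℕ) (X : ℝ), 1 ≤ X → (M : ℝ) ≤ X → (#(reps M) : ℝ) ≤ C * X ^ δ := by
  obtain ⟨C, hC, hτ⟩ := Nat.exists_card_divisors_le_mul_rpow (half_pos hδ)
  refine ⟨4 * C ^ 2, by positivity, fun M X hX hMX => ?_⟩
  have hXδ : 1 ≤ X ^ δ := Real.one_le_rpow hX hδ.le
  rcases eq_or_ne M 0 with rfl | hM
  · rw [reps_zero, card_singleton, Nat.cast_one]
    nlinarith
  calc (#(reps M) : ℝ) ≤ 4 * (#M.divisors : ℝ) ^ 2 := by exact_mod_cast card_reps_le hM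
    _ ≤ 4 * (C * (M : ℝ) ^ (δ / 2)) ^ 2 := by gcongr; exact hτ M hM
    _ = 4 * C ^ 2 * (M : ℝ) ^ δ := by
        rw [mul_pow, ← Real.rpow_mul_natCast (Nat.cast_nonneg M)]; ring_nf
    _ ≤ 4 * C ^ 2 * X ^ δ := by gcongr

end SqAddThreeSq

open SqAddThreeSq

lemma sq_add_three_mul_sq_eq {a b c m₁ m₂ : ℕ} (h₁ : a + b + c = m₁)
    (h₂ : a ^ 2 + b ^ 2 + c ^ 2 = m₂) :
    (3 * a - m₁ : ℤ) ^ 2 + 3 * (b - c : ℤ) ^ 2 = ((6 * m₂ - 2 * m₁ ^ 2 : ℕ) : ℤ) := by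
  subst h₁ h₂
  have hle : 2 * (a + b + c) ^ 2 ≤ 6 * (a ^ 2 + b ^ 2 + c ^ 2) := by
    zify; nlinarith [sq_nonneg ((a : ℤ) - b), sq_nonneg ((b : ℤ) - c), sq_nonneg ((a : ℤ) - c)]
  push_cast [Nat.cast_sub hle]
  ring

lemma card_filter_le_card_reps (N m₁ m₂ : ℕ) :
    #((Icc 1 N ×ˢ Icc 1 N ×ˢ Icc 1 N).filter fun y : ℕ × ℕ × ℕ =>
        y.1 + y.2.1 + y.2.2 = m₁ ∧ y.1 ^ 2 + y.2.1 ^ 2 + y.2.2 ^ 2 = m₂) ≤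
      #(reps (6 * m₂ - 2 * m₁ ^ 2)) := by
  refine card_le_card_of_injOn (fun y => (3 * (y.1 : ℤ) - m₁, (y.2.1 : ℤ) - y.2.2))
    (fun y hy => mem_reps.2 (sq_add_three_mul_sq_eq (mem_filter.1 hy).2.1 (mem_filter.1 hy).2.2))
    ?_
  intro y hy z hz hyz
  have hy₁ := (mem_filter.1 hy).2.1
  have hz₁ := (mem_filter.1 hz).2.1
  obtain ⟨h₁, h₂⟩ := Prod.mk.inj hyz
  ext <;> omega

theorem stmt_1 (ε : ℝ) (hε : 0 < ε) :
    ∃ C : ℝ, 0 < C ∧ ∀ N m1 m2 : ℕ,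
      (((Finset.Icc 1 N ×ˢ Finset.Icc 1 N ×ˢ Finset.Icc 1 N).filter
        (fun y => y.1 + y.2.1 + y.2.2 = m1 ∧
          y.1 ^ 2 + y.2.1 ^ 2 + y.2.2 ^ 2 = m2)).card : ℝ) ≤ C * (N : ℝ) ^ ε := by
  obtain ⟨C, hC, hreps⟩ := exists_card_reps_le_mul_rpow (half_pos hε)
  refine ⟨C * 18 ^ (ε / 2), by positivity, fun N m1 m2 => ?_⟩
  set S := (Icc 1 N ×ˢ Icc 1 N ×ˢ Icc 1 N).filter fun y : ℕ × ℕ × ℕ =>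
    y.1 + y.2.1 + y.2.2 = m1 ∧ y.1 ^ 2 + y.2.1 ^ 2 + y.2.2 ^ 2 = m2
  obtain hS | ⟨y, hy⟩ := S.eq_empty_or_nonempty
  · rw [hS, card_empty, Nat.cast_zero]
    positivity
  obtain ⟨hyN, -, hy₂⟩ := mem_filter.1 hy
  simp only [mem_product, mem_Icc] at hyN
  have hN : (1 : ℝ) ≤ N := by exact_mod_cast hyN.1.1.trans hyN.1.2
  have hM : ((6 * m2 - 2 * m1 ^ 2 : ℕ) : ℝ) ≤ 18 * N ^ 2 := by
    have : 6 * m2 - 2 * m1 ^ 2 ≤ 18 * N ^ 2 := by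
      rw [← hy₂]
      have := Nat.pow_le_pow_left hyN.1.2 2
      have := Nat.pow_le_pow_left hyN.2.1.2 2
      have := Nat.pow_le_pow_left hyN.2.2.2 2
      omega
    exact_mod_cast this
  calc (#S : ℝ) ≤ #(reps (6 * m2 - 2 * m1 ^ 2)) := mod_cast card_filter_le_card_reps N m1 m2
    _ ≤ C * (18 * N ^ 2) ^ (ε / 2) := hreps _ _ (by nlinarith) hM
    _ = C * 18 ^ (ε / 2) * N ^ ε := by
        rw [Real.mul_rpow (by norm_num) (by positivity), ← Real.rpow_natCast,
          ← Real.rpow_mul (by positivity)]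
        ring_nf
end

section
/- The sum over all pairs (m1,m2) with m1 ≤ 3N and m2 ≤ 3N^2 of R(m1,m2)^2 is O(N^3 log N), where R(m1,m2) counts triples (y1,y2,y3) with yi ≤ N, y1+y2+y3 = m1, y1^2+y2^2+y3^2 = m2. Equivalently, the number of sextuples (x1,x2,x3,y1,y2,y3) in {1,...,N}^6 with x1+x2+x3 = y1+y2+y3 and x1^2+x2^2+x3^2 = y1^2+y2^2+y3^2 is O(N^3 log N). -/
/-!
Put `a(x) = 2x₁ - x₂ - x₃` and `c(x) = x₂ - x₃`. Since `a² + 3c² = 6 ∑ xᵢ² - 2 (∑ xᵢ)²`, a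
solution `(x, y)` gives `(a(x) - a(y)) (a(x) + a(y)) = 3 (c(y) - c(x)) (c(y) + c(x))`, and `x`, `y`
are recovered from these four integers together with `∑ xᵢ`. So the count is at most `3N` times the
multiplicative energy of `[-6N, 6N]`, which is controlled by that of `[1, Y]`, `Y = 6N`. The latter
is `O(Y² log Y)`: a solution of `xy = zw` factors as `x = ga, y = bk, z = gb, w = ak` with
`a, b ≤ Y / max g k`, and `∑_{g,k ≤ Y} (Y / max g k)² ≤ ∑_{m ≤ Y} 2m (Y/m)² = 2Y² H_Y`.
-/

open Finset Real
open scoped Combinatorics.Additive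

theorem exists_factors_of_mul_eq_mul {α : Type*} [CommMonoidWithZero α] [IsCancelMulZero α]
    [DecompositionMonoid α] {x y z w : α} (hx : x ≠ 0) (h : x * y = z * w) :
    ∃ g a b k, x = g * a ∧ y = b * k ∧ z = g * b ∧ w = a * k := by
  obtain ⟨g, a, ⟨b, rfl⟩, ⟨k, rfl⟩, rfl⟩ := exists_dvd_and_dvd_of_dvd_mul (Dvd.intro y h)
  refine ⟨g, a, b, k, rfl, mul_left_cancel₀ hx ?_, rfl, rfl⟩
  rw [h]; ac_rfl

theorem mulEnergy_Icc_one_le_sum (Y : ℕ) :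
    Eₘ[Icc 1 Y] ≤ ∑ p ∈ Icc 1 Y ×ˢ Icc 1 Y, (Y / max p.1 p.2) ^ 2 := by
  set T := (Icc 1 Y ×ˢ Icc 1 Y).sigma fun p =>
    Icc 1 (Y / max p.1 p.2) ×ˢ Icc 1 (Y / max p.1 p.2)
  let φ : (Σ _ : ℕ × ℕ, ℕ × ℕ) → (ℕ × ℕ) × (ℕ × ℕ) :=
    fun q => ((q.1.1 * q.2.1, q.2.2 * q.1.2), (q.1.1 * q.2.2, q.2.1 * q.1.2))
  rw [mulEnergy_eq_card_filter]
  calc _ ≤ #(T.image φ) := card_le_card ?_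
    _ ≤ #T := Finset.card_image_le
    _ = _ := by simp [T, sq]
  rintro ⟨⟨x, y⟩, z, w⟩ hq
  simp only [mem_filter, mem_product, mem_Icc] at hq
  obtain ⟨⟨⟨⟨hx1, hxY⟩, hy1, hyY⟩, ⟨hz1, hzY⟩, hw1, hwY⟩, h⟩ := hq
  obtain ⟨g, a, b, k, rfl, rfl, rfl, rfl⟩ := exists_factors_of_mul_eq_mul (by omega) h
  have hg : 0 < g := Nat.pos_of_mul_pos_right hx1
  have ha : 0 < a := Nat.pos_of_mul_pos_right hw1
  have hb : 0 < b := Nat.pos_of_mul_pos_left hz1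
  have hk : 0 < k := Nat.pos_of_mul_pos_left hw1
  have hmax : 0 < max g k := lt_max_of_lt_left hg
  refine mem_image.2 ⟨⟨(g, k), (a, b)⟩, ?_, rfl⟩
  simp only [T, mem_sigma, mem_product, mem_Icc, Nat.le_div_iff_mul_le hmax,
    mul_max_of_nonneg _ _ (Nat.zero_le _), max_le_iff]
  refine ⟨⟨⟨hg, ?_⟩, hk, ?_⟩, ⟨ha, ?_, ?_⟩, hb, ?_, ?_⟩ <;> nlinarith

theorem card_filter_max_eq_le (Y m : ℕ) :
    #{p ∈ Icc 1 Y ×ˢ Icc 1 Y | max p.1 p.2 = m} ≤ 2 * m := by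
  calc _ ≤ #((({m} : Finset ℕ) ×ˢ Icc 1 m) ∪ (Icc 1 m ×ˢ ({m} : Finset ℕ))) := card_le_card ?_
    _ ≤ m + m := by simpa using card_union_le ({m} ×ˢ Icc 1 m) (Icc 1 m ×ˢ {m})
    _ = 2 * m := by ring
  intro p
  simp only [mem_filter, mem_product, mem_Icc, mem_union, mem_singleton]
  omega

theorem sum_Icc_prod_max_le {M : Type*} [AddCommMonoid M] [PartialOrder M]
    [IsOrderedAddMonoid M] {F : ℕ → M} (hF : ∀ m, 0 ≤ F m) (Y : ℕ) :
    ∑ p ∈ Icc 1 Y ×ˢ Icc 1 Y, F (max p.1 p.2) ≤ ∑ m ∈ Icc 1 Y, (2 * m) • F m := by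
  rw [← sum_fiberwise_of_maps_to (g := fun p => max p.1 p.2) (t := Icc 1 Y)
    (fun p hp => by simp only [mem_product, mem_Icc] at hp ⊢; omega)]
  refine sum_le_sum fun m _ => ?_
  rw [sum_congr rfl fun p hp => by rw [(mem_filter.1 hp).2], sum_const]
  exact nsmul_le_nsmul_left (hF m) (card_filter_max_eq_le Y m)

theorem mulEnergy_Icc_one_le_mul_log (Y : ℕ) :
    (Eₘ[Icc 1 Y] : ℝ) ≤ 2 * Y ^ 2 * (1 + log Y) := by
  have hterm : ∀ m ∈ Icc 1 Y, (2 * m) • (((Y / m : ℕ) : ℝ) ^ 2) ≤ 2 * Y ^ 2 * (m : ℝ)⁻¹ := by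
    intro m hm
    have hm : (0 : ℝ) < m := by simp only [mem_Icc] at hm; exact_mod_cast hm.1
    calc (2 * m) • (((Y / m : ℕ) : ℝ) ^ 2) ≤ 2 * m * ((Y : ℝ) / m) ^ 2 := by
          rw [nsmul_eq_mul]; push_cast
          gcongr; exact Nat.cast_div_le
      _ = 2 * Y ^ 2 * (m : ℝ)⁻¹ := by field_simp
  calc (Eₘ[Icc 1 Y] : ℝ) ≤ ∑ p ∈ Icc 1 Y ×ˢ Icc 1 Y, ((Y / max p.1 p.2 : ℕ) : ℝ) ^ 2 := by
        exact_mod_cast mulEnergy_Icc_one_le_sum Y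
    _ ≤ ∑ m ∈ Icc 1 Y, (2 * m) • (((Y / m : ℕ) : ℝ) ^ 2) :=
        sum_Icc_prod_max_le (F := fun m => ((Y / m : ℕ) : ℝ) ^ 2) (fun m => by positivity) Y
    _ ≤ ∑ m ∈ Icc 1 Y, 2 * Y ^ 2 * (m : ℝ)⁻¹ := sum_le_sum hterm
    _ = 2 * Y ^ 2 * harmonic Y := by
        rw [← mul_sum, harmonic_eq_sum_Icc]; push_cast; rfl
    _ ≤ 2 * Y ^ 2 * (1 + log Y) := by gcongr; exact harmonic_le_one_add_log Y

theorem card_filter_mul_eq_zero_le {α : Type*} [DecidableEq α] [MulZeroClass α]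
    [NoZeroDivisors α] (s : Finset α) : #{p ∈ s ×ˢ s | p.1 * p.2 = 0} ≤ 2 * #s := by
  calc _ ≤ #((({0} : Finset α) ×ˢ s) ∪ (s ×ˢ ({0} : Finset α))) := card_le_card ?_
    _ ≤ #s + #s := by simpa using card_union_le ({0} ×ˢ s) (s ×ˢ {0})
    _ = 2 * #s := by ring
  intro p
  simp only [mem_filter, mem_product, mem_union, mem_singleton, mul_eq_zero]
  tauto

theorem mulEnergy_Icc_neg_le_mulEnergy_Icc_one (Y : ℕ) :
    Eₘ[Icc (-(Y : ℤ)) Y] ≤ 4 * (2 * Y + 1) ^ 2 + 16 * Eₘ[Icc 1 Y] := by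
  set I := Icc (-(Y : ℤ)) Y
  have hI : #I = 2 * Y + 1 := by simp only [I, Int.card_Icc]; omega
  rw [mulEnergy_eq_card_filter, mulEnergy_eq_card_filter,
    ← card_filter_add_card_filter_not (fun q => q.1.1 * q.1.2 = 0), filter_filter, filter_filter]
  gcongr
  · calc _ ≤ #({p ∈ I ×ˢ I | p.1 * p.2 = 0} ×ˢ {p ∈ I ×ˢ I | p.1 * p.2 = 0}) := by
          refine card_le_card fun q hq => ?_
          simp only [mem_filter, mem_product] at hq ⊢
          obtain ⟨⟨⟨ha, hb⟩, hc, hd⟩, h, h0⟩ := hq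
          exact ⟨⟨⟨ha, hb⟩, h0⟩, ⟨hc, hd⟩, h ▸ h0⟩
      _ ≤ (2 * #I) * (2 * #I) := by
          rw [card_product]
          exact Nat.mul_le_mul (card_filter_mul_eq_zero_le I) (card_filter_mul_eq_zero_le I)
      _ = 4 * (2 * Y + 1) ^ 2 := by rw [hI]; ring
  · calc _ ≤ #({q ∈ (Icc 1 Y ×ˢ Icc 1 Y) ×ˢ Icc 1 Y ×ˢ Icc 1 Y | q.1.1 * q.1.2 = q.2.1 * q.2.2}
          ×ˢ (univ : Finset (Bool × Bool × Bool × Bool))) := by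
          refine card_le_card_of_injOn (fun q =>
            (((q.1.1.natAbs, q.1.2.natAbs), (q.2.1.natAbs, q.2.2.natAbs)),
              (decide (q.1.1 < 0), decide (q.1.2 < 0), decide (q.2.1 < 0), decide (q.2.2 < 0))))
            (fun q hq => ?_) (fun q _ q' _ hq => ?_)
          · simp only [coe_filter, Set.mem_ofPred_eq, mem_product, mem_Icc, I] at hq
            obtain ⟨⟨⟨ha, hb⟩, hc, hd⟩, h, h0⟩ := hq
            have h0' : q.2.1 * q.2.2 ≠ 0 := h ▸ h0
            simp only [ne_eq, mul_eq_zero, not_or] at h0 h0'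
            simp only [coe_product, coe_filter, mem_product, mem_Icc, coe_univ, Set.mem_univ,
              and_true, Set.mem_prod, Set.mem_ofPred_eq, ← Int.natAbs_mul, h]
            omega
          · simp only [Prod.mk.injEq, decide_eq_decide] at hq
            ext <;> omega
      _ = 16 * #{q ∈ (Icc 1 Y ×ˢ Icc 1 Y) ×ˢ Icc 1 Y ×ˢ Icc 1 Y |
            q.1.1 * q.1.2 = q.2.1 * q.2.2} := by
          rw [card_product, card_univ]; simp [Fintype.card_prod, mul_comm]

def vinogradovSolutions (N : ℕ) : Finset ((ℕ × ℕ × ℕ) × (ℕ × ℕ × ℕ)) :=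
  {z ∈ (Icc 1 N ×ˢ Icc 1 N ×ˢ Icc 1 N) ×ˢ (Icc 1 N ×ˢ Icc 1 N ×ˢ Icc 1 N) |
    z.1.1 + z.1.2.1 + z.1.2.2 = z.2.1 + z.2.2.1 + z.2.2.2 ∧
      z.1.1 ^ 2 + z.1.2.1 ^ 2 + z.1.2.2 ^ 2 = z.2.1 ^ 2 + z.2.2.1 ^ 2 + z.2.2.2 ^ 2}

theorem card_vinogradovSolutions_le (N : ℕ) :
    #(vinogradovSolutions N) ≤ 3 * N * Eₘ[Icc (-(6 * N : ℤ)) (6 * N)] := by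
  set I := Icc (-(6 * N : ℤ)) (6 * N)
  let a : ℕ × ℕ × ℕ → ℤ := fun x => 2 * x.1 - x.2.1 - x.2.2
  let c : ℕ × ℕ × ℕ → ℤ := fun x => x.2.1 - x.2.2
  calc #(vinogradovSolutions N)
      ≤ #(Icc 1 (3 * N) ×ˢ {q ∈ (I ×ˢ I) ×ˢ I ×ˢ I | q.1.1 * q.1.2 = q.2.1 * q.2.2}) := by
        refine card_le_card_of_injOn (fun p => (p.1.1 + p.1.2.1 + p.1.2.2,
            ((a p.1 - a p.2, a p.1 + a p.2), (3 * (c p.2 - c p.1), c p.2 + c p.1))))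
          (fun p hp => ?_) (fun p hp p' hp' hpp' => ?_)
        · simp only [vinogradovSolutions, coe_filter, mem_product, mem_Icc,
            Set.mem_ofPred_eq] at hp
          obtain ⟨⟨⟨hx1, hx2, hx3⟩, hy1, hy2, hy3⟩, hsum, hsq⟩ := hp
          have hsum' : (p.1.1 + p.1.2.1 + p.1.2.2 : ℤ) = p.2.1 + p.2.2.1 + p.2.2.2 := by
            exact_mod_cast hsum
          have hsq' : (p.1.1 ^ 2 + p.1.2.1 ^ 2 + p.1.2.2 ^ 2 : ℤ) =
              p.2.1 ^ 2 + p.2.2.1 ^ 2 + p.2.2.2 ^ 2 := by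
            exact_mod_cast hsq
          simp only [coe_product, coe_filter, Set.mem_prod, mem_product, mem_Icc, coe_Icc,
            Set.mem_Icc, Set.mem_ofPred_eq, a, c, I]
          refine ⟨by omega, ⟨⟨by omega, by omega⟩, by omega, by omega⟩, ?_⟩
          -- `a(x)² + 3 c(x)² = 6 ∑ xᵢ² - 2 (∑ xᵢ)²`
          linear_combination 6 * hsq' - 2 * ((p.1.1 + p.1.2.1 + p.1.2.2 : ℤ) +
            p.2.1 + p.2.2.1 + p.2.2.2) * hsum'
        · simp only [vinogradovSolutions, coe_filter, Set.mem_ofPred_eq] at hp hp'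
          simp only [Prod.mk.injEq, a, c] at hpp'
          ext <;> omega
    _ = 3 * N * Eₘ[I] := by rw [card_product, mulEnergy_eq_card_filter]; simp

theorem stmt_2 :
    ∃ C : ℝ, 0 < C ∧ ∀ N : ℕ, 2 ≤ N →
      ((((Finset.Icc 1 N ×ˢ Finset.Icc 1 N ×ˢ Finset.Icc 1 N) ×ˢ
          (Finset.Icc 1 N ×ˢ Finset.Icc 1 N ×ˢ Finset.Icc 1 N)).filter
        (fun z => z.1.1 + z.1.2.1 + z.1.2.2 = z.2.1 + z.2.2.1 + z.2.2.2 ∧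
          z.1.1 ^ 2 + z.1.2.1 ^ 2 + z.1.2.2 ^ 2 =
            z.2.1 ^ 2 + z.2.2.1 ^ 2 + z.2.2.2 ^ 2)).card : ℝ) ≤
        C * (N : ℝ) ^ 3 * Real.log N := by
  refine ⟨25000, by norm_num, fun N hN => ?_⟩
  change (#(vinogradovSolutions N) : ℝ) ≤ _
  have hN' : (2 : ℝ) ≤ N := by exact_mod_cast hN
  have hlog : 1 ≤ 2 * log N := by
    linarith [Real.log_two_gt_d9, log_le_log (by norm_num) hN']
  have hlog6 : log (6 * N) ≤ 4 * log N := by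
    calc log (6 * N) ≤ log ((N : ℝ) ^ 4) := log_le_log (by positivity) (by
        nlinarith [pow_le_pow_left₀ (by norm_num) hN' 3])
      _ = 4 * log N := by rw [Real.log_pow]; norm_num
  have hcount : #(vinogradovSolutions N) ≤
      3 * N * (4 * (2 * (6 * N) + 1) ^ 2 + 16 * Eₘ[Icc 1 (6 * N)]) := by
    have := mulEnergy_Icc_neg_le_mulEnergy_Icc_one (6 * N)
    push_cast at this
    exact (card_vinogradovSolutions_le N).trans (Nat.mul_le_mul_left _ this)
  have hE : (Eₘ[Icc 1 (6 * N)] : ℝ) ≤ 2 * (6 * N) ^ 2 * (6 * log N) := by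
    refine (mulEnergy_Icc_one_le_mul_log (6 * N)).trans ?_
    push_cast
    gcongr
    linarith
  calc (#(vinogradovSolutions N) : ℝ)
      ≤ 3 * N * (4 * (2 * (6 * N) + 1) ^ 2 + 16 * Eₘ[Icc 1 (6 * N)]) := by exact_mod_cast hcount
    _ ≤ 3 * N * (4 * (13 * N) ^ 2 + 16 * (2 * (6 * N) ^ 2 * (6 * log N))) := by
        gcongr; linarith
    _ ≤ 25000 * N ^ 3 * log N := by
        nlinarith [mul_le_mul_of_nonneg_left hlog (by positivity : (0 : ℝ) ≤ N ^ 3)]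
end

section
/- Let q, a1, a2 be integers with q ≥ 1 and gcd(a1, a2, q) = 1, and define the quadratic Gauss sum V(q, a1, a2) = Σ_{r=1}^{q} e((a2 r^2 + a1 r)/q). Then |V(q, a1, a2)| ≪ q^{1/2} with an absolute implied constant. -/
/-!
Weyl differencing: writing `x = y + h`, the phase difference
`a (y + h)² + b (y + h) - (a y² + b y)` is `a h² + b h + 2 a h y`, and summing over `y` with a
primitive character kills every `h` outside `K = {h | 2 a h = 0}`. Hence
`|S|² = q · ∑_{h ∈ K} e((a h² + b h)/q)`. On `K` the cross term `2 a h k` vanishes, so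
`h ↦ e((a h² + b h)/q)` is a character of the group `K`: its sum is `0` or `|K|`. In the second case
it is trivial on the ideal `K`, which forces `2 b K = 0`, so `K` is killed by `2 a`, `2 b` and `q`,
hence (as `gcd(a, b, q) = 1`) by `2`; a cyclic group has at most two such elements, so `|S|² ≤ 2q`.
-/

open Finset Complex ComplexConjugate

namespace AddChar

variable {R : Type*} [CommRing R]

def quadraticOnKer {M : Type*} [CommMonoid M] (ψ : AddChar R M) (a b : R) :
    AddChar (AddMonoidHom.mulLeft (2 * a)).ker M where
  toFun h := ψ (a * h ^ 2 + b * h)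
  map_zero_eq_one' := by simp
  map_add_eq_mul' h k := by
    have hk : 2 * a * k = 0 := k.2
    rw [← map_add_eq_mul]
    congr 1
    push_cast
    linear_combination (h : R) * hk

theorem two_mul_mul_eq_zero_of_quadraticOnKer_eq_zero {M : Type*} [CommMonoid M]
    {ψ : AddChar R M} (hψ : ψ.IsPrimitive) {a b : R} (hχ : quadraticOnKer ψ a b = 0) {h : R}
    (hh : 2 * a * h = 0) : 2 * b * h = 0 := by
  by_contra hbh
  refine hψ hbh (AddChar.ext _ _ fun t => ?_)
  have hth : t * h ∈ (AddMonoidHom.mulLeft (2 * a)).ker := by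
    simp only [AddMonoidHom.mem_ker, AddMonoidHom.coe_mulLeft]
    linear_combination t * hh
  have hone : ψ (a * (t * h) ^ 2 + b * (t * h)) = 1 := DFunLike.congr_fun hχ ⟨t * h, hth⟩
  calc ψ (2 * b * h * t)
      = ψ (a * (t * h) ^ 2 + b * (t * h)) * ψ (a * (t * h) ^ 2 + b * (t * h)) := by
        rw [← map_add_eq_mul]
        congr 1
        linear_combination (-(t ^ 2 * h)) * hh
    _ = 1 := by rw [hone, one_mul]

section Fintype

variable [Fintype R] [DecidableEq R]

theorem sq_norm_sum_quadratic_eq {ψ : AddChar R ℂ} (hψ : ψ.IsPrimitive) (a b : R) :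
    (‖∑ x, ψ (a * x ^ 2 + b * x)‖ ^ 2 : ℂ) =
      Fintype.card R * ∑ h, quadraticOnKer ψ a b h := by
  have hshift : ∀ y, ∑ x, ψ (a * x ^ 2 + b * x) * conj (ψ (a * y ^ 2 + b * y)) =
      ∑ h, ψ (a * h ^ 2 + b * h) * ψ (y * (2 * a * h)) := fun y =>
    (Fintype.sum_equiv (Equiv.addRight y) _ _ fun h => by
      rw [Equiv.coe_addRight, ← map_neg_eq_conj, ← map_add_eq_mul, ← map_add_eq_mul]
      congr 1
      ring).symm
  rw [← Complex.mul_conj', map_sum, sum_mul_sum, sum_comm, sum_congr rfl fun y _ => hshift y,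
    sum_comm]
  have hker : ∑ h, quadraticOnKer ψ a b h = ∑ h with 2 * a * h = 0, ψ (a * h ^ 2 + b * h) :=
    (sum_subtype _ (fun h => by simp [AddMonoidHom.mem_ker])
      (fun h => ψ (a * h ^ 2 + b * h))).symm
  simp_rw [← mul_sum, sum_mulShift _ hψ]
  rw [hker, sum_filter, mul_sum]
  refine sum_congr rfl fun h _ => ?_
  split_ifs <;> ring

theorem sq_norm_sum_quadratic_le {ψ : AddChar R ℂ} (hψ : ψ.IsPrimitive) (a b : R) :
    ‖∑ x, ψ (a * x ^ 2 + b * x)‖ ^ 2 ≤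
      Fintype.card R * #{h | 2 * a * h = 0 ∧ 2 * b * h = 0} := by
  have hsq := sq_norm_sum_quadratic_eq hψ a b
  rw [sum_eq_ite] at hsq
  split_ifs at hsq with hχ
  · have hcard : Fintype.card (AddMonoidHom.mulLeft (2 * a)).ker ≤
        #{h | 2 * a * h = 0 ∧ 2 * b * h = 0} := by
      rw [Fintype.card_subtype]
      refine card_le_card fun h hh => ?_
      simp only [mem_filter, mem_univ, true_and, AddMonoidHom.mem_ker,
        AddMonoidHom.coe_mulLeft] at hh ⊢
      exact ⟨hh, two_mul_mul_eq_zero_of_quadraticOnKer_eq_zero hψ hχ hh⟩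
    have hsq' : ‖∑ x, ψ (a * x ^ 2 + b * x)‖ ^ 2 =
        Fintype.card R * Fintype.card (AddMonoidHom.mulLeft (2 * a)).ker := mod_cast hsq
    rw [hsq']
    gcongr
  · have hsq' : ‖∑ x, ψ (a * x ^ 2 + b * x)‖ ^ 2 = 0 := by exact_mod_cast hsq.trans (mul_zero _)
    rw [hsq']
    positivity

end Fintype

end AddChar

namespace ZMod

theorem sum_Icc_one_natCast {M : Type*} [AddCommMonoid M] (q : ℕ) [NeZero q] (g : ZMod q → M) :
    ∑ r ∈ Icc 1 q, g r = ∑ x, g x := by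
  have hrange : ∑ r ∈ range q, g (1 + r) = ∑ x, g (1 + x) :=
    sum_nbij' (fun r => (r : ZMod q)) ZMod.val (by simp) (by simp [ZMod.val_lt])
      (fun r hr => ZMod.val_cast_of_lt (mem_range.1 hr)) (by simp) (by simp)
  rw [← Ico_add_one_right_eq_Icc, sum_Ico_eq_sum_range, Nat.add_sub_cancel]
  push_cast
  rw [hrange]
  exact Fintype.sum_equiv (Equiv.addLeft 1) _ _ fun _ => rfl

theorem card_two_mul_eq_zero_le_two {q : ℕ} [NeZero q] {a b : ℤ}
    (hgcd : Int.gcd b (Int.gcd a q) = 1) :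
    #{h : ZMod q | 2 * (a : ZMod q) * h = 0 ∧ 2 * (b : ZMod q) * h = 0} ≤ 2 := by
  obtain ⟨u, v, hbez⟩ : IsCoprime (b : ZMod q) a := by
    obtain ⟨u, v, huv⟩ := Int.isCoprime_iff_gcd_eq_one.2 hgcd
    refine ⟨u, v * Int.gcdA a q, ?_⟩
    have := congrArg (Int.cast : ℤ → ZMod q) huv
    rw [Int.gcd_eq_gcd_ab] at this
    push_cast [ZMod.natCast_self] at this
    linear_combination this
  refine (card_le_card fun h hh => ?_).trans (IsAddCyclic.card_nsmul_eq_zero_le two_pos)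
  simp only [mem_filter, mem_univ, true_and] at hh ⊢
  rw [two_nsmul]
  linear_combination (-2 * h) * hbez + u * hh.2 + v * hh.1

end ZMod

theorem stmt_7 :
    ∃ C : ℝ, 0 < C ∧ ∀ (q : ℕ) (a1 a2 : ℤ), 1 ≤ q →
      Int.gcd a1 (Int.gcd a2 q) = 1 →
      ‖(∑ r ∈ Finset.Icc 1 q,
          Complex.exp (2 * Real.pi * Complex.I *
            (((a2 * r ^ 2 + a1 * r : ℤ) : ℝ) / q)))‖ ≤ C * Real.sqrt q := by
  refine ⟨Real.sqrt 2, by positivity, fun q a1 a2 hq hgcd => ?_⟩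
  have : NeZero q := ⟨by omega⟩
  have hsum : ∑ r ∈ Icc 1 q, Complex.exp (2 * Real.pi * Complex.I *
      (((a2 * r ^ 2 + a1 * r : ℤ) : ℝ) / q)) =
      ∑ x : ZMod q, ZMod.stdAddChar ((a2 : ZMod q) * x ^ 2 + (a1 : ZMod q) * x) := by
    rw [← ZMod.sum_Icc_one_natCast q]
    refine sum_congr rfl fun r _ => ?_
    have := ZMod.stdAddChar_coe (N := q) (a2 * r ^ 2 + a1 * r)
    push_cast at this
    rw [this]
    congr 1
    push_cast
    ring
  rw [hsum, ← Real.sqrt_mul zero_le_two, Real.le_sqrt (norm_nonneg _) (by positivity)]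
  calc _ ≤ (q : ℝ) * #{h : ZMod q | 2 * (a2 : ZMod q) * h = 0 ∧ 2 * (a1 : ZMod q) * h = 0} := by
        simpa using
          AddChar.sq_norm_sum_quadratic_le (ZMod.isPrimitive_stdAddChar q) (a2 : ZMod q) a1
    _ ≤ q * 2 := by gcongr; exact_mod_cast ZMod.card_two_mul_eq_zero_le_two hgcd
    _ = 2 * q := mul_comm _ _
end

section
/- For fixed q ∈ ℕ and m = (m1, m2) ∈ ℕ², one has the identity Σ_{(a1,a2): 1 ≤ a1,a2 ≤ q, gcd(a1,a2,q)=1} V(q,a1,a2)^3 e(−(a1 m1 + a2 m2)/q) = q · Σ_{1 ≤ a ≤ q, gcd(a,q)=1} G_{m1}(q,a) e(−a m2/q), where V(q,a1,a2) = Σ_{r=1}^q e((a2 r² + a1 r)/q) and G_{m1}(q,a) = Σ_{1 ≤ r1,r2 ≤ q} e(a(2r1² + 2r1r2 + 2r2² − 2m1(r1+r2) + m1²)/q). -/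
/-!
Write `c = m1 - r1 - r2` and `t = r1² + r2² - m2`. Expanding the cube, the left side is
`∑_{r1,r2,r3} S(r3 - c, r3² + t)`, where `S(v,u) = ∑ e((a1 v + a2 u)/q)` over primitive pairs
`(a1, a2)` mod `q`; the exponent on the right side is `a((m1 - r1 - r2)² + r1² + r2²)`, so the
right side is `q ∑_{r1,r2} c_q(c² + t)` with `c_q` the Ramanujan sum. Möbius inversion over
`gcd(a1, a2, q)` gives `S(v,u) = ∑_{dn=q} μ(d) n² [n ∣ v] [n ∣ u]` and likewise
`c_q(w) = ∑_{dn=q} μ(d) n [n ∣ w]`. Summing over `r3 ∈ [1, q]`, the congruence `r3 ≡ c (mod n)`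
has exactly `d` solutions and turns `n ∣ r3² + t` into `n ∣ c² + t`, and `d n² = q n`.
-/

open Finset Complex ArithmeticFunction
open scoped ArithmeticFunction.Moebius

noncomputable def expFrac (q : ℕ) (n : ℤ) : ℂ :=
  exp (2 * Real.pi * I * n / q)

theorem expFrac_add (q : ℕ) (m n : ℤ) : expFrac q (m + n) = expFrac q m * expFrac q n := by
  rw [expFrac, expFrac, expFrac, ← exp_add]
  push_cast
  ring_nf

theorem expFrac_natCast_mul (q k : ℕ) (n : ℤ) : expFrac q (k * n) = expFrac q n ^ k := by
  rw [expFrac, expFrac, ← exp_nat_mul]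
  push_cast
  ring_nf

theorem expFrac_mul_mul_left {d : ℕ} (hd : d ≠ 0) (n : ℕ) (k : ℤ) :
    expFrac (d * n) (d * k) = expFrac n k := by
  rw [expFrac, expFrac]
  congr 1
  push_cast
  field_simp

theorem expFrac_eq_one_iff {q : ℕ} (hq : q ≠ 0) (n : ℤ) : expFrac q n = 1 ↔ (q : ℤ) ∣ n := by
  have : NeZero q := ⟨hq⟩
  rw [expFrac, ← ZMod.stdAddChar_coe, ← ZMod.intCast_zmod_eq_zero_iff_dvd,
    ← (ZMod.stdAddChar (N := q)).map_zero_eq_one, ZMod.injective_stdAddChar.eq_iff]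

theorem exp_intCast_div_eq_expFrac (q : ℕ) (n : ℤ) :
    exp (2 * Real.pi * I * ((n : ℝ) / q)) = expFrac q n := by
  rw [expFrac]
  push_cast
  ring_nf

theorem exp_natCast_div_eq_expFrac (q N : ℕ) :
    exp (2 * Real.pi * I * ((N : ℝ) / q)) = expFrac q N := by
  simpa using exp_intCast_div_eq_expFrac q N

theorem exp_neg_natCast_div_eq_expFrac (q N : ℕ) :
    exp (-(2 * Real.pi * I) * ((N : ℝ) / q)) = expFrac q (-N) := by
  rw [expFrac]
  push_cast
  ring_nf

theorem sum_expFrac_pow_three_mul (q : ℕ) (s : Finset ℕ) (f : ℕ → ℤ) (x : ℤ) :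
    (∑ r ∈ s, expFrac q (f r)) ^ 3 * expFrac q x =
      ∑ r1 ∈ s, ∑ r2 ∈ s, ∑ r3 ∈ s, expFrac q (f r1 + f r2 + f r3 + x) := by
  simp only [pow_three, sum_mul, mul_sum, expFrac_add]
  exact sum_congr rfl fun _ _ => sum_congr rfl fun _ _ => sum_congr rfl fun _ _ => by ring

theorem geom_sum_Icc_one_of_pow_eq_one {K : Type*} [DivisionRing K] [DecidableEq K] {z : K} {n : ℕ}
    (hz : z ^ n = 1) : ∑ a ∈ Icc 1 n, z ^ a = if z = 1 then (n : K) else 0 := by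
  split_ifs with h
  · simp [h]
  · rw [← Ico_add_one_right_eq_Icc, geom_sum_Ico h (by omega), pow_succ, hz]
    simp

theorem sum_Icc_expFrac_mul {q : ℕ} (hq : q ≠ 0) (w : ℤ) :
    ∑ a ∈ Icc 1 q, expFrac q (a * w) = if (q : ℤ) ∣ w then (q : ℂ) else 0 := by
  have hroot : expFrac q w ^ q = 1 := by
    rw [← expFrac_natCast_mul, expFrac_eq_one_iff hq]
    exact dvd_mul_right _ _
  simp_rw [expFrac_natCast_mul]
  rw [geom_sum_Icc_one_of_pow_eq_one hroot]
  simp only [expFrac_eq_one_iff hq]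

theorem sum_Icc_filter_dvd {M : Type*} [AddCommMonoid M] {d : ℕ} (hd : d ≠ 0) (n : ℕ)
    (f : ℕ → M) : ∑ a ∈ Icc 1 (d * n) with d ∣ a, f a = ∑ b ∈ Icc 1 n, f (d * b) := by
  have hd0 := Nat.pos_of_ne_zero hd
  rw [← sum_image (g := (d * ·)) fun _ _ _ _ h => Nat.eq_of_mul_eq_mul_left hd0 h]
  congr 1
  ext a
  simp only [mem_filter, mem_Icc, mem_image]
  constructor
  · rintro ⟨⟨h1, h2⟩, b, rfl⟩
    exact ⟨b, ⟨Nat.pos_of_ne_zero (by rintro rfl; simp at h1),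
      Nat.le_of_mul_le_mul_left h2 hd0⟩, rfl⟩
  · rintro ⟨b, ⟨h1, h2⟩, rfl⟩
    exact ⟨⟨Nat.one_le_iff_ne_zero.2 (mul_ne_zero hd (by omega)), Nat.mul_le_mul_left d h2⟩,
      dvd_mul_right _ _⟩

theorem sum_Icc_filter_dvd_expFrac_mul {d : ℕ} (hd : d ≠ 0) {n : ℕ} (hn : n ≠ 0) (w : ℤ) :
    ∑ a ∈ Icc 1 (d * n) with d ∣ a, expFrac (d * n) (a * w) =
      if (n : ℤ) ∣ w then (n : ℂ) else 0 := by
  rw [sum_Icc_filter_dvd hd, ← sum_Icc_expFrac_mul hn]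
  refine sum_congr rfl fun b _ => ?_
  rw [Nat.cast_mul, mul_assoc, expFrac_mul_mul_left hd]

theorem sum_divisors_moebius {R : Type*} [Ring R] (n : ℕ) :
    ∑ d ∈ n.divisors, (μ d : R) = if n = 1 then 1 else 0 := by
  have h := congrArg (· n) (coe_moebius_mul_coe_zeta (R := R))
  simp only [coe_mul_zeta_apply, intCoe_apply, one_apply] at h
  exact h

theorem sum_filter_coprime_eq_sum_moebius {ι R : Type*} [Ring R] {q : ℕ} (hq : q ≠ 0)
    (s : Finset ι) (k : ι → ℕ) (g : ι → R) :
    ∑ x ∈ s with Nat.gcd (k x) q = 1, g x =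
      ∑ d ∈ q.divisors, (μ d : R) * ∑ x ∈ s with d ∣ k x, g x := by
  simp_rw [sum_filter, mul_sum]
  rw [sum_comm]
  refine sum_congr rfl fun x _ => ?_
  have hdiv : {d ∈ q.divisors | d ∣ k x} = (Nat.gcd (k x) q).divisors := by
    rw [← Nat.divisors_filter_dvd_of_dvd hq (Nat.gcd_dvd_right _ _)]
    refine filter_congr fun d hd => ?_
    exact ⟨fun h => Nat.dvd_gcd h (Nat.dvd_of_mem_divisors hd),
      fun h => h.trans (Nat.gcd_dvd_left _ _)⟩
  simp_rw [mul_ite, mul_zero, ← ite_zero_mul, ← sum_mul, ← sum_filter, hdiv,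
    sum_divisors_moebius, ite_zero_mul, one_mul]

theorem card_Icc_filter_dvd_sub {n : ℕ} (hn : n ≠ 0) (d : ℕ) (c : ℤ) :
    #{r ∈ Icc 1 (d * n) | (n : ℤ) ∣ (r : ℕ) - c} = d := by
  have : NeZero n := ⟨hn⟩
  set v := (c : ZMod n).val
  have hmod : ∀ r : ℕ, (n : ℤ) ∣ r - c ↔ r ≡ v [MOD n] := fun r => by
    rw [← ZMod.intCast_zmod_eq_zero_iff_dvd, Int.cast_sub, sub_eq_zero,
      ← ZMod.natCast_eq_natCast_iff, ZMod.natCast_val, ZMod.cast_id', id, Int.cast_natCast]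
  rw [filter_congr fun r _ => hmod r, ← Int.ofNat_inj, ← zero_add 1, Icc_add_one_left_eq_Ioc,
    Nat.Ioc_filter_modEq_card _ _ (Nat.pos_of_ne_zero hn)]
  have hfloor : ((d * n : ℕ) - v : ℚ) / n = d + (0 - v) / n := by
    field_simp
    push_cast
    ring
  rw [hfloor, Int.floor_natCast_add]
  simp

theorem dvd_sq_add_iff_of_dvd_sub {R : Type*} [CommRing R] {n r c : R} (t : R)
    (h : n ∣ r - c) : n ∣ r ^ 2 + t ↔ n ∣ c ^ 2 + t := by
  rw [show r ^ 2 + t = (r - c) * (r + c) + (c ^ 2 + t) by ring,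
    dvd_add_right (dvd_mul_of_dvd_left h _)]

theorem sum_Icc_ite_dvd_sub_mul_ite_dvd_sq_add {R : Type*} [CommSemiring R] {n : ℕ} (hn : n ≠ 0)
    (d : ℕ) (c t : ℤ) :
    ∑ r ∈ Icc 1 (d * n), (if (n : ℤ) ∣ (r : ℕ) - c then (n : R) else 0) *
        (if (n : ℤ) ∣ (r : ℕ) ^ 2 + t then (n : R) else 0) =
      (d * n : ℕ) * if (n : ℤ) ∣ c ^ 2 + t then (n : R) else 0 := by
  have hr : ∀ r : ℕ, (if (n : ℤ) ∣ r - c then (n : R) else 0) *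
      (if (n : ℤ) ∣ r ^ 2 + t then (n : R) else 0) =
      if (n : ℤ) ∣ r - c then (n : R) * (if (n : ℤ) ∣ c ^ 2 + t then (n : R) else 0) else 0 :=
    fun r => by
      by_cases h : (n : ℤ) ∣ r - c
      · simp only [h, dvd_sq_add_iff_of_dvd_sub t h, if_true]
      · simp only [h, if_false, zero_mul]
  rw [sum_congr rfl fun r _ => hr r, ← sum_filter, sum_const, card_Icc_filter_dvd_sub hn,
    nsmul_eq_mul]
  push_cast
  ring

noncomputable def ramanujanSum (q : ℕ) (w : ℤ) : ℂ :=
  ∑ a ∈ Icc 1 q with Nat.gcd a q = 1, expFrac q (a * w)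

noncomputable def ramanujanSumPair (q : ℕ) (v u : ℤ) : ℂ :=
  ∑ a ∈ Icc 1 q ×ˢ Icc 1 q with Nat.gcd a.1 (Nat.gcd a.2 q) = 1, expFrac q (a.1 * v + a.2 * u)

theorem ramanujanSum_eq_sum_moebius {q : ℕ} (hq : q ≠ 0) (w : ℤ) :
    ramanujanSum q w =
      ∑ x ∈ q.divisorsAntidiagonal, (μ x.1 : ℂ) * if (x.2 : ℤ) ∣ w then (x.2 : ℂ) else 0 := by
  rw [ramanujanSum, sum_filter_coprime_eq_sum_moebius hq (Icc 1 q) (fun a => a),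
    Nat.sum_divisorsAntidiagonal (fun d n => (μ d : ℂ) * if (n : ℤ) ∣ w then (n : ℂ) else 0)]
  refine sum_congr rfl fun d hd => ?_
  obtain ⟨n, rfl⟩ := Nat.dvd_of_mem_divisors hd
  have hd0 : d ≠ 0 := left_ne_zero_of_mul hq
  rw [Nat.mul_div_cancel_left n (Nat.pos_of_ne_zero hd0),
    sum_Icc_filter_dvd_expFrac_mul hd0 (right_ne_zero_of_mul hq)]

theorem ramanujanSumPair_eq_sum_moebius {q : ℕ} (hq : q ≠ 0) (v u : ℤ) :
    ramanujanSumPair q v u =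
      ∑ x ∈ q.divisorsAntidiagonal, (μ x.1 : ℂ) *
        ((if (x.2 : ℤ) ∣ v then (x.2 : ℂ) else 0) * if (x.2 : ℤ) ∣ u then (x.2 : ℂ) else 0) := by
  have hgcd : ∀ a : ℕ × ℕ, Nat.gcd a.1 (Nat.gcd a.2 q) = Nat.gcd (Nat.gcd a.1 a.2) q :=
    fun a => (Nat.gcd_assoc _ _ _).symm
  rw [ramanujanSumPair, filter_congr fun a _ => by rw [hgcd a],
    sum_filter_coprime_eq_sum_moebius hq _ (fun a : ℕ × ℕ => Nat.gcd a.1 a.2),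
    Nat.sum_divisorsAntidiagonal (fun d n => (μ d : ℂ) *
      ((if (n : ℤ) ∣ v then (n : ℂ) else 0) * if (n : ℤ) ∣ u then (n : ℂ) else 0))]
  refine sum_congr rfl fun d hd => ?_
  obtain ⟨n, rfl⟩ := Nat.dvd_of_mem_divisors hd
  have hd0 : d ≠ 0 := left_ne_zero_of_mul hq
  have hn0 : n ≠ 0 := right_ne_zero_of_mul hq
  simp_rw [Nat.dvd_gcd_iff]
  rw [Nat.mul_div_cancel_left n (Nat.pos_of_ne_zero hd0), filter_product (d ∣ ·) (d ∣ ·),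
    sum_product, ← sum_Icc_filter_dvd_expFrac_mul hd0 hn0 v,
    ← sum_Icc_filter_dvd_expFrac_mul hd0 hn0 u, sum_mul_sum]
  simp_rw [expFrac_add]

theorem sum_Icc_ramanujanSumPair_sub_sq_add {q : ℕ} (hq : q ≠ 0) (c t : ℤ) :
    ∑ r ∈ Icc 1 q, ramanujanSumPair q ((r : ℕ) - c) ((r : ℕ) ^ 2 + t) =
      q * ramanujanSum q (c ^ 2 + t) := by
  simp_rw [ramanujanSumPair_eq_sum_moebius hq, ramanujanSum_eq_sum_moebius hq, mul_sum]
  rw [sum_comm]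
  refine sum_congr rfl fun x hx => ?_
  obtain ⟨hdn, -⟩ := Nat.mem_divisorsAntidiagonal.1 hx
  rw [← mul_sum, ← hdn,
    sum_Icc_ite_dvd_sub_mul_ite_dvd_sq_add (right_ne_zero_of_mul (hdn ▸ hq))]
  ring

theorem stmt_8 (q : ℕ) (hq : 0 < q) (m1 m2 : ℕ) :
    ∑ a ∈ (Finset.Icc 1 q ×ˢ Finset.Icc 1 q).filter
        (fun a => Nat.gcd a.1 (Nat.gcd a.2 q) = 1),
      (∑ r ∈ Finset.Icc 1 q,
          Complex.exp (2 * Real.pi * Complex.I *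
            (((a.2 * r ^ 2 + a.1 * r : ℕ) : ℝ) / q))) ^ 3 *
        Complex.exp (-(2 * Real.pi * Complex.I) * (((a.1 * m1 + a.2 * m2 : ℕ) : ℝ) / q)) =
    (q : ℂ) * ∑ a ∈ (Finset.Icc 1 q).filter (fun a => Nat.gcd a q = 1),
      (∑ r1 ∈ Finset.Icc 1 q, ∑ r2 ∈ Finset.Icc 1 q,
          Complex.exp (2 * Real.pi * Complex.I *
            ((((a : ℤ) * (2 * r1 ^ 2 + 2 * r1 * r2 + 2 * r2 ^ 2
              - 2 * m1 * (r1 + r2) + (m1 : ℤ) ^ 2) : ℤ) : ℝ) / q))) *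
        Complex.exp (-(2 * Real.pi * Complex.I) * (((a * m2 : ℕ) : ℝ) / q)) := by
  simp_rw [exp_natCast_div_eq_expFrac, exp_neg_natCast_div_eq_expFrac,
    exp_intCast_div_eq_expFrac, sum_expFrac_pow_three_mul, sum_mul, ← expFrac_add]
  calc _ = ∑ r1 ∈ Icc 1 q, ∑ r2 ∈ Icc 1 q, ∑ r3 ∈ Icc 1 q, ramanujanSumPair q
          ((r3 : ℤ) - (m1 - r1 - r2)) ((r3 : ℤ) ^ 2 + ((r1 : ℤ) ^ 2 + r2 ^ 2 - m2)) := by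
        rw [sum_comm]; refine sum_congr rfl fun r1 _ => ?_
        rw [sum_comm]; refine sum_congr rfl fun r2 _ => ?_
        rw [sum_comm]; refine sum_congr rfl fun r3 _ => ?_
        refine sum_congr rfl fun a _ => congrArg _ ?_
        push_cast
        ring
    _ = ∑ r1 ∈ Icc 1 q, ∑ r2 ∈ Icc 1 q,
          q * ramanujanSum q (((m1 : ℤ) - r1 - r2) ^ 2 + ((r1 : ℤ) ^ 2 + r2 ^ 2 - m2)) := by
        simp_rw [sum_Icc_ramanujanSumPair_sub_sq_add hq.ne']
    _ = _ := by
        simp_rw [← mul_sum, ramanujanSum]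
        congr 1
        conv_rhs => rw [sum_comm]
        refine sum_congr rfl fun r1 _ => ?_
        conv_rhs => rw [sum_comm]
        refine sum_congr rfl fun r2 _ => ?_
        refine sum_congr rfl fun a _ => congrArg _ ?_
        push_cast
        ring
end

section
/- Let F1, F2 ∈ ℤ_p[X1, X2] and a0, b0 ∈ ℤ_p with Δ0 = (∂F1/∂X1 ∂F2/∂X2 − ∂F2/∂X1 ∂F1/∂X2)(a0,b0) ≠ 0 and max{|F1(a0,b0)|_p, |F2(a0,b0)|_p} < |Δ0|_p². Then there exists a unique pair (a,b) ∈ ℤ_p × ℤ_p with F1(a,b) = F2(a,b) = 0 and max{|a−a0|_p, |b−b0|_p} ≤ p^{−1}|Δ0|_p. -/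
open MvPolynomial Metric Function
open scoped Matrix NNReal

/-!
Let `J` be the Jacobian of `F` at `x₀`, `Δ = det J` and `A = adj J`. Polynomials over `ℤ_[p]`
have quadratic Taylor remainders, so on the ball `B` of radius `|Δ|/p` around `x₀` the
increments of `x ↦ A F(x)` differ from those of `x ↦ Δ x` by at most `(|Δ|/p) |x - y|`. Hence
the Newton map `x ↦ x - A F(x) / Δ` (the division is exact in `ℤ_[p]` since `|A F(x)| ≤ |Δ|`
on `B`) is a `1/p`-contraction of `B`. As `|F(x₀)| < |Δ|²` forces `|F(x₀)| ≤ |Δ|²/p`, it moves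
`x₀` by at most the radius of `B`, which in an ultrametric space makes it map `B` into itself.
Its unique fixed point is the unique zero of `F` in `B`.
-/

theorem IsUltrametricDist.existsUnique_isFixedPt_of_lipschitzOnWith {E : Type*} [MetricSpace E]
    [CompleteSpace E] [IsUltrametricDist E] {T : E → E} {x₀ : E} {r : ℝ} {K : ℝ≥0}
    (hK : K < 1) (hT : LipschitzOnWith K T (closedBall x₀ r)) (hT₀ : dist (T x₀) x₀ ≤ r) :
    ∃! x, x ∈ closedBall x₀ r ∧ IsFixedPt T x := by
  have hx₀ : x₀ ∈ closedBall x₀ r := mem_closedBall_self (dist_nonneg.trans hT₀)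
  have hmaps : Set.MapsTo T (closedBall x₀ r) (closedBall x₀ r) := fun x hx =>
    (dist_triangle_max _ (T x₀) _).trans <| max_le
      ((hT.dist_le_mul x hx x₀ hx₀).trans (mul_le_of_le_one_left dist_nonneg hK.le |>.trans hx))
      hT₀
  obtain ⟨x, hx, hTx, -⟩ := ContractingWith.exists_fixedPoint' isClosed_closedBall.isComplete
    hmaps ⟨hK, hT.mapsToRestrict hmaps⟩ hx₀ (edist_ne_top _ _)
  refine ⟨x, ⟨hx, hTx⟩, fun y ⟨hy, hTy⟩ => dist_le_zero.1 ?_⟩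
  have : dist y x ≤ K * dist y x := by
    simpa only [hTy.eq, hTx.eq] using hT.dist_le_mul y hy x hx
  nlinarith [dist_nonneg (x := y) (y := x), (show (K : ℝ) < 1 from hK)]

namespace MvPolynomial

variable {σ R : Type*} [CommSemiring R]

noncomputable def jacobianAt (F : σ → MvPolynomial σ R) (x : σ → R) : Matrix σ σ R :=
  Matrix.of fun i j => eval x (pderiv j (F i))

theorem dotProduct_eval_pderiv_mul_X [Fintype σ] (q : MvPolynomial σ R) (j : σ) (x v : σ → R) :
    (fun i => eval x (pderiv i (q * X j))) ⬝ᵥ v =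
      (fun i => eval x (pderiv i q)) ⬝ᵥ v * x j + eval x q * v j := by
  classical
  have : (fun i => eval x (pderiv i (q * X j))) =
      x j • (fun i => eval x (pderiv i q)) + eval x q • Pi.single j 1 := by
    funext i
    rcases eq_or_ne i j with rfl | hij <;> simp [pderiv_X, *, mul_comm, add_comm]
  rw [this, add_dotProduct, smul_dotProduct, smul_dotProduct, single_one_dotProduct]
  simp [mul_comm]

end MvPolynomial

namespace PadicInt

variable {p : ℕ} [Fact p.Prime]

theorem dvd_of_norm_le {a b : ℤ_[p]} (hb : b ≠ 0) (h : ‖a‖ ≤ ‖b‖) : b ∣ a := by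
  have hb' : (b : ℚ_[p]) ≠ 0 := mt PadicInt.coe_eq_zero.1 hb
  refine ⟨⟨a / b, ?_⟩, Subtype.ext ?_⟩
  · rw [norm_div, div_le_one (norm_pos_iff.2 hb')]
    exact h
  · show (a : ℚ_[p]) = b * (a / b)
    rw [mul_div_cancel₀ _ hb']

theorem norm_le_inv_mul_of_norm_lt {z w : ℤ_[p]} (h : ‖z‖ < ‖w‖) :
    ‖z‖ ≤ (p : ℝ)⁻¹ * ‖w‖ := by
  have hw : w ≠ 0 := by
    rintro rfl
    exact (norm_nonneg z).not_gt (by simpa using h)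
  obtain ⟨c, rfl⟩ := dvd_of_norm_le hw h.le
  rw [norm_mul] at h ⊢
  have hc : ‖c‖ ≤ (p : ℝ) ^ (-1 : ℤ) :=
    (norm_le_pow_iff_norm_lt_pow_add_one c (-1)).2 <| by
      simpa using (mul_lt_iff_lt_one_right (norm_pos_iff.2 hw)).1 h
  rw [_root_.zpow_neg_one] at hc
  rw [mul_comm]
  exact mul_le_mul_of_nonneg_right hc (norm_nonneg w)

theorem norm_mul_le_right (a b : ℤ_[p]) : ‖a * b‖ ≤ ‖b‖ := by
  rw [norm_mul]
  exact mul_le_of_le_one_left (norm_nonneg b) (norm_le_one a)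

theorem norm_dotProduct_le {ι : Type*} [Fintype ι] (c v : ι → ℤ_[p]) : ‖c ⬝ᵥ v‖ ≤ ‖v‖ :=
  IsUltrametricDist.norm_sum_le_of_forall_le_of_nonneg (norm_nonneg v) fun i _ =>
    (norm_mul_le_right _ _).trans (norm_le_pi_norm v i)

theorem norm_mulVec_le {m n : Type*} [Fintype m] [Fintype n] (A : Matrix m n ℤ_[p])
    (v : n → ℤ_[p]) : ‖A *ᵥ v‖ ≤ ‖v‖ :=
  (pi_norm_le_iff_of_nonneg (norm_nonneg v)).2 fun i => norm_dotProduct_le (A i) v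

theorem exists_smul_eq_of_norm_le {ι : Type*} [Fintype ι] {b : ℤ_[p]} (hb : b ≠ 0)
    {v : ι → ℤ_[p]} (h : ‖v‖ ≤ ‖b‖) : ∃ c : ι → ℤ_[p], b • c = v := by
  choose c hc using fun i => dvd_of_norm_le hb ((norm_le_pi_norm v i).trans h)
  exact ⟨c, funext fun i => (hc i).symm⟩

variable {σ : Type*} [Fintype σ]

theorem norm_eval_sub_eval_le (G : MvPolynomial σ ℤ_[p]) (x y : σ → ℤ_[p]) :
    ‖eval x G - eval y G‖ ≤ ‖x - y‖ := by
  induction G using MvPolynomial.induction_on with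
  | C a => simp
  | add q r hq hr =>
    rw [map_add, map_add, add_sub_add_comm]
    exact (IsUltrametricDist.norm_add_le_max _ _).trans (max_le hq hr)
  | mul_X q j hq =>
    have : eval x (q * X j) - eval y (q * X j) =
        (eval x q - eval y q) * x j + eval y q * (x j - y j) := by
      simp only [eval_mul, eval_X]; ring
    rw [this]
    refine (IsUltrametricDist.norm_add_le_max _ _).trans (max_le ?_ ?_)
    · rw [mul_comm]; exact (norm_mul_le_right _ _).trans hq
    · exact (norm_mul_le_right _ _).trans (norm_le_pi_norm (x - y) j)

theorem norm_eval_sub_eval_sub_dotProduct_le (G : MvPolynomial σ ℤ_[p]) {x₀ x y : σ → ℤ_[p]}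
    {r : ℝ} (hx : ‖x - x₀‖ ≤ r) (hy : ‖y - x₀‖ ≤ r) :
    ‖eval x G - eval y G - (fun i => eval x₀ (pderiv i G)) ⬝ᵥ (x - y)‖ ≤ r * ‖x - y‖ := by
  have hr : 0 ≤ r := (norm_nonneg _).trans hx
  induction G using MvPolynomial.induction_on with
  | C a => simp [dotProduct, mul_nonneg hr (norm_nonneg _)]
  | add q s hq hs =>
    have : eval x (q + s) - eval y (q + s) - (fun i => eval x₀ (pderiv i (q + s))) ⬝ᵥ (x - y) =
        (eval x q - eval y q - (fun i => eval x₀ (pderiv i q)) ⬝ᵥ (x - y)) +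
        (eval x s - eval y s - (fun i => eval x₀ (pderiv i s)) ⬝ᵥ (x - y)) := by
      have hgrad : (fun i => eval x₀ (pderiv i (q + s))) =
          (fun i => eval x₀ (pderiv i q)) + fun i => eval x₀ (pderiv i s) := by
        funext i; simp
      rw [hgrad, add_dotProduct, map_add, map_add]
      ring
    rw [this]
    exact (IsUltrametricDist.norm_add_le_max _ _).trans (max_le hq hs)
  | mul_X q j hq =>
    set L := (fun i => eval x₀ (pderiv i q)) ⬝ᵥ (x - y)
    have : eval x (q * X j) - eval y (q * X j) -
          (fun i => eval x₀ (pderiv i (q * X j))) ⬝ᵥ (x - y) =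
        (eval x q - eval y q - L) * x j + L * (x j - x₀ j) +
        (eval y q - eval x₀ q) * (x j - y j) := by
      rw [dotProduct_eval_pderiv_mul_X]; simp only [L, eval_mul, eval_X, Pi.sub_apply]; ring
    rw [this]
    refine (IsUltrametricDist.norm_add_le_max _ _).trans (max_le
      ((IsUltrametricDist.norm_add_le_max _ _).trans (max_le ?_ ?_)) ?_) <;> rw [norm_mul]
    · exact (mul_le_of_le_one_right (norm_nonneg _) (norm_le_one _)).trans hq
    · rw [mul_comm]
      exact mul_le_mul (norm_le_pi_norm (x - x₀) j |>.trans hx) (norm_dotProduct_le _ _)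
        (norm_nonneg _) hr
    · exact mul_le_mul ((norm_eval_sub_eval_le q y x₀).trans hy) (norm_le_pi_norm (x - y) j)
        (norm_nonneg _) hr

theorem norm_eval_sub_eval_sub_jacobianAt_mulVec_le (F : σ → MvPolynomial σ ℤ_[p])
    {x₀ x y : σ → ℤ_[p]} {r : ℝ} (hx : ‖x - x₀‖ ≤ r) (hy : ‖y - x₀‖ ≤ r) :
    ‖(fun i => eval x (F i)) - (fun i => eval y (F i)) - jacobianAt F x₀ *ᵥ (x - y)‖ ≤
      r * ‖x - y‖ :=
  (pi_norm_le_iff_of_nonneg (mul_nonneg ((norm_nonneg _).trans hx) (norm_nonneg _))).2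
    fun i => norm_eval_sub_eval_sub_dotProduct_le (F i) hx hy

theorem exists_smul_eq_of_norm_sub_sub_smul_le {f : (σ → ℤ_[p]) → σ → ℤ_[p]} {b : ℤ_[p]}
    {x₀ : σ → ℤ_[p]} {r : ℝ} (hb : b ≠ 0) (hr : r ≤ 1)
    (hf : ∀ x, ‖x - x₀‖ ≤ r → ‖f x - f x₀ - b • (x - x₀)‖ ≤ ‖b‖ * r)
    (hf₀ : ‖f x₀‖ ≤ ‖b‖ * r) :
    ∃ c : (σ → ℤ_[p]) → σ → ℤ_[p], ∀ x, ‖x - x₀‖ ≤ r → b • c x = f x := by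
  have hfb : ∀ x, ‖x - x₀‖ ≤ r → ‖f x‖ ≤ ‖b‖ := by
    intro x hx
    calc ‖f x‖ = ‖f x₀ + (f x - f x₀ - b • (x - x₀)) + b • (x - x₀)‖ := by
          congr 1; abel
      _ ≤ ‖b‖ * r := (IsUltrametricDist.norm_add_le_max _ _).trans <| max_le
          ((IsUltrametricDist.norm_add_le_max _ _).trans (max_le hf₀ (hf x hx)))
          (by rw [norm_smul]; exact mul_le_mul_of_nonneg_left hx (norm_nonneg b))
      _ ≤ ‖b‖ := mul_le_of_le_one_right (norm_nonneg b) hr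
  have : ∀ x, ∃ c : σ → ℤ_[p], ‖x - x₀‖ ≤ r → b • c = f x := fun x =>
    if hx : ‖x - x₀‖ ≤ r then (exists_smul_eq_of_norm_le hb (hfb x hx)).imp fun _ hc _ => hc
    else ⟨0, fun h => absurd h hx⟩
  choose c hc using this
  exact ⟨c, hc⟩

theorem existsUnique_eq_zero_of_norm_sub_sub_smul_le {f : (σ → ℤ_[p]) → σ → ℤ_[p]}
    {b : ℤ_[p]} {x₀ : σ → ℤ_[p]} {r : ℝ} {K : ℝ≥0} (hb : b ≠ 0) (hK : K < 1) (hr : r ≤ 1)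
    (hf : ∀ x y, ‖x - x₀‖ ≤ r → ‖y - x₀‖ ≤ r → ‖f x - f y - b • (x - y)‖ ≤ K * ‖b‖ * ‖x - y‖)
    (hf₀ : ‖f x₀‖ ≤ ‖b‖ * r) :
    ∃! x, f x = 0 ∧ ‖x - x₀‖ ≤ r := by
  have hb' : 0 < ‖b‖ := norm_pos_iff.2 hb
  have hx₀ : ‖x₀ - x₀‖ ≤ r := by
    simpa using (mul_nonneg_iff_of_pos_left hb').1 ((norm_nonneg _).trans hf₀)
  have hf' : ∀ x, ‖x - x₀‖ ≤ r → ‖f x - f x₀ - b • (x - x₀)‖ ≤ ‖b‖ * r := fun x hx => by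
    refine (hf x x₀ hx hx₀).trans ?_
    rw [mul_right_comm, mul_comm ‖b‖]
    exact mul_le_mul_of_nonneg_right
      ((mul_le_of_le_one_left (norm_nonneg _) hK.le).trans hx) (norm_nonneg b)
  obtain ⟨c, hc⟩ := exists_smul_eq_of_norm_sub_sub_smul_le hb hr hf' hf₀
  have hT : LipschitzOnWith K (fun x => x - c x) (closedBall x₀ r) := by
    refine LipschitzOnWith.of_dist_le_mul fun x hx y hy => ?_
    rw [mem_closedBall_iff_norm] at hx hy
    rw [dist_eq_norm, dist_eq_norm]
    have : b • (x - c x - (y - c y)) = -(f x - f y - b • (x - y)) := by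
      simp only [smul_sub, hc x hx, hc y hy]; abel
    have := congrArg norm this
    rw [norm_smul, norm_neg] at this
    refine le_of_mul_le_mul_left ?_ hb'
    rw [this]; linarith [hf x y hx hy]
  have hT₀ : dist (x₀ - c x₀) x₀ ≤ r := by
    have := congrArg norm (hc x₀ hx₀)
    rw [norm_smul] at this
    rw [dist_eq_norm, sub_sub_cancel_left, norm_neg]
    exact le_of_mul_le_mul_left (this ▸ hf₀) hb'
  refine (existsUnique_congr fun x => ?_).1
    (IsUltrametricDist.existsUnique_isFixedPt_of_lipschitzOnWith hK hT hT₀)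
  rw [mem_closedBall_iff_norm, IsFixedPt, and_comm, and_congr_left_iff]
  intro hx
  rw [← hc x hx, smul_eq_zero_iff_right hb, sub_eq_self]

theorem existsUnique_eval_eq_zero_of_norm_lt_norm_det_sq [DecidableEq σ]
    (F : σ → MvPolynomial σ ℤ_[p]) (x₀ : σ → ℤ_[p])
    (h : ‖fun i => eval x₀ (F i)‖ < ‖(jacobianAt F x₀).det‖ ^ 2) :
    ∃! x : σ → ℤ_[p], (∀ i, eval x (F i) = 0) ∧
      ‖x - x₀‖ ≤ (p : ℝ)⁻¹ * ‖(jacobianAt F x₀).det‖ := by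
  set J := jacobianAt F x₀
  have hΔ : J.det ≠ 0 := by
    rintro hΔ
    exact (norm_nonneg _).not_gt (by simpa [hΔ] using h)
  have hp : 1 < (p : ℝ≥0) := Nat.one_lt_cast.2 (Fact.out : p.Prime).one_lt
  have hF₀ : ‖fun i => eval x₀ (F i)‖ ≤ ‖J.det‖ * ((p : ℝ)⁻¹ * ‖J.det‖) := by
    refine (pi_norm_le_iff_of_nonneg (by positivity)).2 fun i => ?_
    have := norm_le_inv_mul_of_norm_lt (w := J.det ^ 2) <|
      (norm_le_pi_norm (fun i => eval x₀ (F i)) i).trans_lt (by simpa using h)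
    rw [norm_pow] at this
    linarith
  have hadj : ∀ v, J.adjugate *ᵥ (J *ᵥ v) = J.det • v := fun v => by
    rw [Matrix.mulVec_mulVec, Matrix.adjugate_mul, Matrix.smul_mulVec, Matrix.one_mulVec]
  have hadj_eq_zero : ∀ v, J.adjugate *ᵥ v = 0 ↔ v = 0 := fun v => by
    refine ⟨fun hv => ?_, fun hv => hv ▸ Matrix.mulVec_zero J.adjugate⟩
    have := congrArg (J *ᵥ ·) hv
    simp only [Matrix.mulVec_mulVec, Matrix.mul_adjugate, Matrix.smul_mulVec,
      Matrix.one_mulVec, Matrix.mulVec_zero] at this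
    exact (smul_eq_zero_iff_right hΔ).1 this
  have hr : (p : ℝ)⁻¹ * ‖J.det‖ ≤ 1 :=
    mul_le_one₀ (inv_le_one_of_one_le₀ (by exact_mod_cast hp.le)) (norm_nonneg _) (norm_le_one _)
  have key := existsUnique_eq_zero_of_norm_sub_sub_smul_le
    (f := fun x => J.adjugate *ᵥ fun i => eval x (F i)) hΔ (inv_lt_one_of_one_lt₀ hp) hr
    (fun x y hx hy => by
      rw [← hadj, ← Matrix.mulVec_sub, ← Matrix.mulVec_sub, NNReal.coe_inv, NNReal.coe_natCast]
      exact (norm_mulVec_le _ _).trans (norm_eval_sub_eval_sub_jacobianAt_mulVec_le F hx hy))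
    ((norm_mulVec_le _ _).trans hF₀)
  refine (existsUnique_congr fun x => ?_).1 key
  rw [hadj_eq_zero, _root_.funext_iff]
  rfl

end PadicInt

theorem stmt_13_general (p : ℕ) [Fact p.Prime]
    (F1 F2 : MvPolynomial (Fin 2) ℤ_[p]) (a0 b0 : ℤ_[p])
    (Δ0 : ℤ_[p])
    (hΔ0 : Δ0 = MvPolynomial.eval (fun i : Fin 2 => if i = 0 then a0 else b0)
      (pderiv 0 F1 * pderiv 1 F2 - pderiv 0 F2 * pderiv 1 F1))
    (hfar : max ‖MvPolynomial.eval (fun i : Fin 2 => if i = 0 then a0 else b0) F1‖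
        ‖MvPolynomial.eval (fun i : Fin 2 => if i = 0 then a0 else b0) F2‖ < ‖Δ0‖ ^ 2) :
    ∃! ab : ℤ_[p] × ℤ_[p],
      MvPolynomial.eval (fun i : Fin 2 => if i = 0 then ab.1 else ab.2) F1 = 0 ∧
      MvPolynomial.eval (fun i : Fin 2 => if i = 0 then ab.1 else ab.2) F2 = 0 ∧
      max ‖ab.1 - a0‖ ‖ab.2 - b0‖ ≤ (p : ℝ)⁻¹ * ‖Δ0‖ := by
  have hnorm : ∀ v : Fin 2 → ℤ_[p], ‖v‖ = max ‖v 0‖ ‖v 1‖ := fun v =>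
    le_antisymm ((pi_norm_le_iff_of_nonneg (by positivity)).2 (Fin.forall_fin_two.2
      ⟨le_max_left _ _, le_max_right _ _⟩)) (max_le (norm_le_pi_norm v 0) (norm_le_pi_norm v 1))
  have hvec : ∀ a b : ℤ_[p], (fun i : Fin 2 => if i = 0 then a else b) = ![a, b] := fun a b => by
    funext i; fin_cases i <;> rfl
  have hdet : (jacobianAt ![F1, F2] ![a0, b0]).det = Δ0 := by
    rw [Matrix.det_fin_two, hΔ0, hvec]
    simp [jacobianAt]
    ring
  have := PadicInt.existsUnique_eval_eq_zero_of_norm_lt_norm_det_sq ![F1, F2] ![a0, b0]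
    (by rw [hdet, hnorm]; simpa [hvec] using hfar)
  refine ((finTwoArrowEquiv ℤ_[p]).symm.existsUnique_congr fun ab => ?_).2 this
  simp [hvec, hnorm, Fin.forall_fin_two, hdet, and_assoc]

theorem stmt_13 (p : ℕ) [Fact p.Prime]
    (F1 F2 : MvPolynomial (Fin 2) ℤ_[p]) (a0 b0 : ℤ_[p])
    (Δ0 : ℤ_[p])
    (hΔ0 : Δ0 = MvPolynomial.eval (fun i : Fin 2 => if i = 0 then a0 else b0)
      (pderiv 0 F1 * pderiv 1 F2 - pderiv 0 F2 * pderiv 1 F1))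
    (hΔ0ne : Δ0 ≠ 0)
    (hfar : max ‖MvPolynomial.eval (fun i : Fin 2 => if i = 0 then a0 else b0) F1‖
        ‖MvPolynomial.eval (fun i : Fin 2 => if i = 0 then a0 else b0) F2‖ < ‖Δ0‖ ^ 2) :
    ∃! ab : ℤ_[p] × ℤ_[p],
      MvPolynomial.eval (fun i : Fin 2 => if i = 0 then ab.1 else ab.2) F1 = 0 ∧
      MvPolynomial.eval (fun i : Fin 2 => if i = 0 then ab.1 else ab.2) F2 = 0 ∧
      max ‖ab.1 - a0‖ ‖ab.2 - b0‖ ≤ (p : ℝ)⁻¹ * ‖Δ0‖ :=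
  stmt_13_general p F1 F2 a0 b0 Δ0 hΔ0 hfar
end

section
/- For every l1 ∈ ℤ≥0 and l2 ∈ ℤ≥0, the Lebesgue measure of the set {x ∈ ℝ³ : |x1 + x2 + x3 − l1| ≤ 1/2 and |x1² + x2² + x3² − l2| ≤ 1/2} is bounded by an absolute constant independent of l1 and l2. -/
open MeasureTheory Measure Set Real
open scoped ENNReal

/-!
The shear `(x₁, x₂, x₃) ↦ (x₁ + x₂ + x₃, x₂, x₃)` preserves volume and turns the slab into
`s ∈ [l₁ - 1/2, l₁ + 1/2]` for the new first coordinate `s`. For fixed `s` the shell becomes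
`{(a, b) | c ≤ (s - a - b)² + a² + b² ≤ c + 1}`; completing the square writes the quadratic as
`2u² + (3/2)v² + s²/3`, so this slice is an elliptic annulus of area at most `π / √3`, uniformly in
`c` because the round annulus `{c ≤ ‖z‖² ≤ c + 1}` has area at most `π`. Fubini over `s` gives the
bound `π / √3`.
-/

theorem measurePreserving_shear {G α : Type*} [MeasurableSpace G] [AddGroup G] [MeasurableAdd₂ G]
    [MeasurableSpace α] (μ : Measure G) [μ.IsAddRightInvariant] [SFinite μ] (ν : Measure α)
    [SFinite ν] {h : α → G} (hh : Measurable h) :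
    MeasurePreserving (fun p : G × α => (p.1 + h p.2, p.2)) (μ.prod ν) (μ.prod ν) :=
  measurePreserving_swap.comp <|
    ((MeasurePreserving.id ν).skew_product (g := fun a x => x + h a) (by fun_prop)
      (.of_forall fun a => map_add_right_eq_self μ (h a))).comp measurePreserving_swap

theorem MeasureTheory.Measure.prod_apply_le_mul_of_slice_le {α β : Type*} [MeasurableSpace α]
    [MeasurableSpace β] {μ : Measure α} {ν : Measure β} {s : Set (α × β)} (hs : MeasurableSet s)
    {t : Set α} (ht : MeasurableSet t) (hst : s ⊆ Prod.fst ⁻¹' t) {M : ℝ≥0∞}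
    (hM : ∀ x ∈ t, ν (Prod.mk x ⁻¹' s) ≤ M) :
    μ.prod ν s ≤ M * μ t :=
  calc μ.prod ν s ≤ ∫⁻ x, ν (Prod.mk x ⁻¹' s) ∂μ := prod_apply_le hs
    _ ≤ ∫⁻ x, t.indicator (fun _ => M) x ∂μ := lintegral_mono fun x => by
        by_cases hx : x ∈ t
        · simpa [hx] using hM x hx
        · have : Prod.mk x ⁻¹' s = ∅ := eq_empty_of_forall_notMem fun y hy => hx (hst hy)
          simp [hx, this]
    _ = M * μ t := lintegral_indicator_const ht M

theorem Complex.volume_setOf_sq_norm_mem_Icc {c d : ℝ} (hc : 0 ≤ c) (hcd : c ≤ d) :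
    volume {z : ℂ | ‖z‖ ^ 2 ∈ Icc c d} = .ofReal (d - c) * NNReal.pi := by
  have hset : {z : ℂ | ‖z‖ ^ 2 ∈ Icc c d} = Metric.closedBall 0 √d \ Metric.ball 0 √c := by
    ext z
    simp [Real.le_sqrt (norm_nonneg z) (hc.trans hcd), Real.sqrt_le_left, and_comm]
  rw [hset, measure_sdiff (Metric.ball_subset_closedBall.trans
      (Metric.closedBall_subset_closedBall (Real.sqrt_le_sqrt hcd)))
      measurableSet_ball.nullMeasurableSet measure_ball_lt_top.ne,
    Complex.volume_closedBall, Complex.volume_ball, ← ENNReal.sub_mul (fun _ _ => by simp),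
    ← ENNReal.ofReal_pow (sqrt_nonneg _), ← ENNReal.ofReal_pow (sqrt_nonneg _),
    sq_sqrt (hc.trans hcd), sq_sqrt hc, ENNReal.ofReal_sub _ hc]

theorem volume_setOf_mul_sq_add_mul_sq_mem_Icc_le {a b : ℝ} (ha : 0 < a) (hb : 0 < b) (c : ℝ)
    {w : ℝ} (hw : 0 ≤ w) :
    volume {p : ℝ × ℝ | a * p.1 ^ 2 + b * p.2 ^ 2 ∈ Icc c (c + w)} ≤
      .ofReal (π * w / √(a * b)) := by
  let T : ℝ × ℝ →ₗ[ℝ] ℝ × ℝ := (√a • LinearMap.id).prodMap (√b • LinearMap.id)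
  have hT : LinearMap.det T = √(a * b) := by
    simp [T, LinearMap.det_prodMap, Real.sqrt_mul ha.le]
  set E : Set ℂ := {z | ‖z‖ ^ 2 ∈ Icc (max c 0) (max c 0 + w)}
  have hsub : {p : ℝ × ℝ | a * p.1 ^ 2 + b * p.2 ^ 2 ∈ Icc c (c + w)} ⊆
      T ⁻¹' (Complex.measurableEquivRealProd.symm ⁻¹' E) := by
    intro p hp
    have hTp : ‖Complex.measurableEquivRealProd.symm (T p)‖ ^ 2 = a * p.1 ^ 2 + b * p.2 ^ 2 := by
      simp only [T, LinearMap.prodMap_apply, LinearMap.smul_apply, LinearMap.id_apply, smul_eq_mul,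
        Complex.sq_norm, Complex.normSq_apply, Complex.measurableEquivRealProd_symm_apply]
      linear_combination p.1 ^ 2 * sq_sqrt ha.le + p.2 ^ 2 * sq_sqrt hb.le
    simp only [E, mem_ofPred_eq, mem_preimage, hTp, mem_Icc] at hp ⊢
    exact ⟨max_le hp.1 (by positivity), by linarith [le_max_left c 0]⟩
  calc volume {p : ℝ × ℝ | a * p.1 ^ 2 + b * p.2 ^ 2 ∈ Icc c (c + w)}
      ≤ volume (T ⁻¹' (Complex.measurableEquivRealProd.symm ⁻¹' E)) := measure_mono hsub
    _ = .ofReal |(√(a * b))⁻¹| * (.ofReal w * NNReal.pi) := by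
      rw [addHaar_preimage_linearMap _ (hT ▸ (sqrt_pos.2 (mul_pos ha hb)).ne'), hT,
        Complex.volume_preserving_equiv_real_prod.symm.measure_preimage (by measurability),
        Complex.volume_setOf_sq_norm_mem_Icc (le_max_right c 0) (by linarith), add_sub_cancel_left]
    _ = .ofReal (π * w / √(a * b)) := by
      rw [← ENNReal.ofReal_coe_nnreal, NNReal.coe_real_pi, ← ENNReal.ofReal_mul hw,
        ← ENNReal.ofReal_mul (abs_nonneg _), abs_of_nonneg (by positivity)]
      ring_nf

theorem volume_setOf_sq_sub_add_sq_add_sq_mem_Icc_le (s c : ℝ) {w : ℝ} (hw : 0 ≤ w) :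
    volume {p : ℝ × ℝ | (s - p.1 - p.2) ^ 2 + p.1 ^ 2 + p.2 ^ 2 ∈ Icc c (c + w)} ≤
      .ofReal (π * w / √3) := by
  have hΦ : MeasurePreserving (fun p : ℝ × ℝ => (p.1 + (p.2 - s) / 2, p.2) + (0, -(s / 3)))
      volume volume :=
    (measurePreserving_add_right volume (0, -(s / 3))).comp
      (measurePreserving_shear volume volume (h := fun t => (t - s) / 2) (by fun_prop))
  have hset : {p : ℝ × ℝ | (s - p.1 - p.2) ^ 2 + p.1 ^ 2 + p.2 ^ 2 ∈ Icc c (c + w)} =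
      (fun p : ℝ × ℝ => (p.1 + (p.2 - s) / 2, p.2) + (0, -(s / 3))) ⁻¹'
        {q | 2 * q.1 ^ 2 + 3 / 2 * q.2 ^ 2 ∈ Icc (c - s ^ 2 / 3) (c - s ^ 2 / 3 + w)} := by
    ext p
    have key : 2 * (p.1 + (p.2 - s) / 2) ^ 2 + 3 / 2 * (p.2 - s / 3) ^ 2 =
        (s - p.1 - p.2) ^ 2 + p.1 ^ 2 + p.2 ^ 2 - s ^ 2 / 3 := by ring
    simp only [mem_preimage, mem_ofPred_eq, Prod.fst_add, Prod.snd_add, add_zero,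
      ← sub_eq_add_neg, key, mem_Icc]
    constructor <;> rintro ⟨h₁, h₂⟩ <;> constructor <;> linarith
  rw [hset, hΦ.measure_preimage (by measurability)]
  convert volume_setOf_mul_sq_add_mul_sq_mem_Icc_le two_pos (by norm_num : (0 : ℝ) < 3 / 2) _ hw
    using 4
  norm_num

theorem stmt_17 :
    ∃ C : ℝ, 0 < C ∧ ∀ l1 l2 : ℕ,
      volume {x : ℝ × ℝ × ℝ |
        |x.1 + x.2.1 + x.2.2 - (l1 : ℝ)| ≤ 1/2 ∧
        |x.1 ^ 2 + x.2.1 ^ 2 + x.2.2 ^ 2 - (l2 : ℝ)| ≤ 1/2} ≤ ENNReal.ofReal C := by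
  refine ⟨π / √3, by positivity, fun l1 l2 => ?_⟩
  set I : Set ℝ := Icc ((l1 : ℝ) - 1 / 2) (l1 + 1 / 2)
  set T : Set (ℝ × ℝ × ℝ) := {p | p.1 ∈ I ∧
    (p.1 - p.2.1 - p.2.2) ^ 2 + p.2.1 ^ 2 + p.2.2 ^ 2 ∈ Icc ((l2 : ℝ) - 1 / 2) (l2 - 1 / 2 + 1)}
  have hT : MeasurableSet T := by measurability
  calc _ ≤ volume ((fun p : ℝ × ℝ × ℝ => (p.1 + (p.2.1 + p.2.2), p.2)) ⁻¹' T) := by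
        refine measure_mono fun x ⟨h₁, h₂⟩ => ?_
        have key : x.1 + (x.2.1 + x.2.2) - x.2.1 - x.2.2 = x.1 := by ring
        rw [abs_le] at h₁ h₂
        simp only [T, I, mem_preimage, mem_ofPred_eq, key, mem_Icc]
        refine ⟨⟨?_, ?_⟩, ?_, ?_⟩ <;> linarith
    _ = volume T :=
        (measurePreserving_shear volume volume (h := fun y : ℝ × ℝ => y.1 + y.2)
          (by fun_prop)).measure_preimage hT.nullMeasurableSet
    _ ≤ .ofReal (π / √3) * volume I :=
        prod_apply_le_mul_of_slice_le hT measurableSet_Icc (fun p hp => hp.1)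
          fun s _ => (measure_mono fun y hy => hy.2).trans <|
            (volume_setOf_sq_sub_add_sq_add_sq_mem_Icc_le s _ zero_le_one).trans_eq
              (by rw [mul_one])
    _ = .ofReal (π / √3) := by norm_num [I, Real.volume_Icc]
end
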